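/- arXiv:1210.6366 — 7 statements merged into one kernel-verified Lean document; each statement's English description precedes it below -/
import Mathlib

section
/- Let f ∈ F(x,y) and let φ, ψ be F-automorphisms of F(x,y). Let K be an algebraic closure of F(x,y) and let Φ, Ψ be field automorphisms of K extending φ and ψ respectively. Then there exist g, h ∈ K with f = Φ(g) − g + Ψ(h) − h if and only if there exist g, h ∈ F(x,y) with f = φ(g) − g + ψ(h) − h. -/
/-- `F(x,y)`, the field of rational functions in two variables over `F`,
realized as `RatFunc (RatFunc F)` (the inner variable is `x`, the outer is `y`). -/
noncomputable abbrev RatFunc2 (F : Type*) [Field F] : Type _ := RatFunc (RatFunc F)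

set_option linter.unusedSectionVars false

open Polynomial IntermediateField Module

section NTr

variable (E : Type*) {K : Type*} [Field E] [Field K] [Algebra E K]

/-- The normalized trace of an algebraic element: minus the next-to-leading coefficient of its
minimal polynomial, divided by the degree. -/
noncomputable def ntr (a : K) : E :=
  -(minpoly E a).nextCoeff / ((minpoly E a).natDegree : E)

lemma ntr_algebraMap (e : E) : ntr E (algebraMap E K e) = e := by
  simp [ntr, minpoly.eq_X_sub_C K e]

variable {E}

lemma minpoly_ringEquiv (φ : E ≃+* E) (Φ : K ≃+* K)
    (hΦ : ∀ a : E, Φ (algebraMap E K a) = algebraMap E K (φ a)) {a : K} (ha : IsIntegral E a) :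
    minpoly E (Φ a) = (minpoly E a).map (φ : E →+* E) := by
  symm
  apply minpoly.eq_of_irreducible_of_monic
  · have := (MulEquiv.irreducible_iff (Polynomial.mapEquiv (φ : E ≃+* E))).mpr
      (minpoly.irreducible ha)
    simpa [Polynomial.mapEquiv] using this
  · have hcomp : (algebraMap E K).comp (φ : E →+* E) = (Φ : K →+* K).comp (algebraMap E K) :=
      RingHom.ext fun a => (hΦ a).symm
    have h0 : (Φ : K →+* K) (Polynomial.eval₂ (algebraMap E K) a (minpoly E a)) = 0 := by
      rw [← aeval_def, minpoly.aeval, map_zero]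
    rw [hom_eval₂] at h0
    rw [aeval_def, eval₂_map, hcomp]
    exact h0
  · exact (minpoly.monic ha).map _

lemma ntr_conj (φ : E ≃+* E) (Φ : K ≃+* K)
    (hΦ : ∀ a : E, Φ (algebraMap E K a) = algebraMap E K (φ a)) {a : K} (ha : IsIntegral E a) :
    ntr E (Φ a) = φ (ntr E a) := by
  rw [ntr, ntr, minpoly_ringEquiv φ Φ hΦ ha, nextCoeff_map φ.injective, natDegree_map,
    map_div₀, map_neg, map_natCast]
  rfl

variable [CharZero E]

set_option synthInstance.maxHeartbeats 800000 in
set_option maxHeartbeats 1600000 in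
lemma trace_eq_finrank_mul_ntr (L : IntermediateField E K) [FiniteDimensional E ↥L] (x : ↥L) :
    Algebra.trace E ↥L x = (finrank E ↥L : E) * ntr E (x : K) := by
  have hx : IsIntegral E x := IsIntegral.of_finite E x
  have hmp : minpoly E (x : K) = minpoly E x :=
    minpoly.algebraMap_eq (algebraMap (↥L) K).injective x
  have hpb := (IntermediateField.adjoin.powerBasis hx).trace_gen_eq_nextCoeff_minpoly
  rw [IntermediateField.adjoin.powerBasis_gen hx, IntermediateField.minpoly_gen E x] at hpb
  have hd : finrank E ↥E⟮x⟯ = (minpoly E x).natDegree := IntermediateField.adjoin.finrank hx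
  have htot : finrank E ↥E⟮x⟯ * finrank (↥E⟮x⟯) ↥L = finrank E ↥L :=
    Module.finrank_mul_finrank E (↥E⟮x⟯) ↥L
  have hdpos : 0 < (minpoly E x).natDegree := minpoly.natDegree_pos hx
  rw [trace_eq_trace_adjoin E x, hpb, ntr, hmp]
  rw [nsmul_eq_mul]
  rw [← htot, hd]
  have hne : ((minpoly E x).natDegree : E) ≠ 0 := Nat.cast_ne_zero.mpr hdpos.ne'
  push_cast
  field_simp

variable (E) [Algebra.IsAlgebraic E K]

lemma ntr_add (a b : K) : ntr E (a + b) = ntr E a + ntr E b := by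
  set L := IntermediateField.adjoin E {a, b} with hL
  have hint : ∀ x ∈ ({a, b} : Set K), IsIntegral E x := fun x _ =>
    (Algebra.IsAlgebraic.isAlgebraic x).isIntegral
  haveI : FiniteDimensional E ↥L := IntermediateField.finiteDimensional_adjoin hint
  have haL : a ∈ L := IntermediateField.subset_adjoin E _ (by simp)
  have hbL : b ∈ L := IntermediateField.subset_adjoin E _ (by simp)
  have h := map_add (Algebra.trace E ↥L) ⟨a, haL⟩ ⟨b, hbL⟩
  rw [trace_eq_finrank_mul_ntr L (⟨a, haL⟩ + ⟨b, hbL⟩), trace_eq_finrank_mul_ntr L ⟨a, haL⟩,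
    trace_eq_finrank_mul_ntr L ⟨b, hbL⟩] at h
  have hco : (((⟨a, haL⟩ + ⟨b, hbL⟩ : ↥L)) : K) = a + b := rfl
  rw [hco] at h
  have hn : (finrank E ↥L : E) ≠ 0 := Nat.cast_ne_zero.mpr Module.finrank_pos.ne'
  have := mul_left_cancel₀ hn (h.trans (mul_add _ _ _).symm)
  exact this

lemma ntr_zero : ntr E (0 : K) = 0 := by
  simpa using ntr_algebraMap (K := K) E (0 : E)

lemma ntr_neg (a : K) : ntr E (-a) = -ntr E a := by
  have h := ntr_add E a (-a)
  rw [add_neg_cancel, ntr_zero] at h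
  exact eq_neg_of_add_eq_zero_right h.symm

lemma ntr_sub (a b : K) : ntr E (a - b) = ntr E a - ntr E b := by
  rw [sub_eq_add_neg, ntr_add, ntr_neg, sub_eq_add_neg]

end NTr

/-- Let `F` be an algebraically closed field of characteristic zero, let `φ, ψ` be
`F`-automorphisms of `F(x,y)`, let `K` be an algebraic closure of `F(x,y)` and let
`Φ, Ψ` be automorphisms of `K` extending `φ` and `ψ`.  Then `f ∈ F(x,y)` is a sum of
a `Φ`-difference and a `Ψ`-difference in `K` iff it is a sum of a `φ`-difference and
a `ψ`-difference in `F(x,y)`. -/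
theorem summable_in_closure_iff (F : Type*) [Field F] [IsAlgClosed F] [CharZero F]
    (φ ψ : RatFunc2 F ≃ₐ[F] RatFunc2 F)
    (Φ Ψ : AlgebraicClosure (RatFunc2 F) ≃+* AlgebraicClosure (RatFunc2 F))
    (hΦ : ∀ a : RatFunc2 F,
      Φ (algebraMap (RatFunc2 F) (AlgebraicClosure (RatFunc2 F)) a)
        = algebraMap (RatFunc2 F) (AlgebraicClosure (RatFunc2 F)) (φ a))
    (hΨ : ∀ a : RatFunc2 F,
      Ψ (algebraMap (RatFunc2 F) (AlgebraicClosure (RatFunc2 F)) a)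
        = algebraMap (RatFunc2 F) (AlgebraicClosure (RatFunc2 F)) (ψ a))
    (f : RatFunc2 F) :
    (∃ g h : AlgebraicClosure (RatFunc2 F),
        algebraMap (RatFunc2 F) (AlgebraicClosure (RatFunc2 F)) f
          = Φ g - g + Ψ h - h)
      ↔ (∃ g h : RatFunc2 F, f = φ g - g + ψ h - h) := by
  set E := RatFunc2 F with hE
  set K := AlgebraicClosure (RatFunc2 F) with hK
  haveI : CharZero (RatFunc F) :=
    charZero_of_injective_algebraMap (algebraMap F (RatFunc F)).injective
  haveI : CharZero E :=
    charZero_of_injective_algebraMap (algebraMap (RatFunc F) (RatFunc2 F)).injective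
  constructor
  · rintro ⟨g, h, hgh⟩
    have hint : ∀ a : K, IsIntegral E a := fun a =>
      (Algebra.IsAlgebraic.isAlgebraic a).isIntegral
    have hg : ntr E (Φ g) = φ (ntr E g) := ntr_conj φ.toRingEquiv Φ hΦ (hint g)
    have hh : ntr E (Ψ h) = ψ (ntr E h) := ntr_conj ψ.toRingEquiv Ψ hΨ (hint h)
    refine ⟨ntr E g, ntr E h, ?_⟩
    have h0 := congrArg (ntr E) hgh
    rw [ntr_algebraMap] at h0
    rw [ntr_sub E, ntr_add E, ntr_sub E, hg, hh] at h0
    exact h0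
  · rintro ⟨g, h, hgh⟩
    refine ⟨algebraMap E K g, algebraMap E K h, ?_⟩
    rw [hgh, hΦ, hΨ, map_sub, map_add, map_sub]
end

section
/- Every rational function f ∈ E(y) can be decomposed as f = τ_y(g) − g + c with g ∈ E(y) and c ∈ E(y^m). Moreover, for any such decomposition, f is τ_y-summable in E(y) (i.e., f = τ_y(g') − g' for some g' ∈ E(y)) if and only if c = 0. -/
/-!
Write `σ x = ζ x` with `ζ` a primitive `m`-th root of unity. Then `σ` fixes `K = E(x^m)` and
`σ^m = 1`. Since `x` is a root of `T^m - x^m ∈ K[T]`, the field `E(x)` equals `K[x]`, so every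
element is a sum of terms `a x^i` with `a ∈ K`. Such a term lies in `K` when `m ∣ i`, and otherwise
`ζ^i ≠ 1` and `a x^i = σ g - g` for `g = a x^i / (ζ^i - 1)`. Conversely, if `c ∈ K` equals
`σ h - h`, summing `σ^j c` over `j < m` telescopes to `m c = σ^m h - h = 0`.
-/

open IntermediateField Polynomial

section RootOfUnityTwist

variable {E L : Type*} [Field E] [Field L] [Algebra E L] {x : L} {ζ : E}

theorem AlgHom.apply_eq_self_of_mem_adjoin_pow {m : ℕ} (hζ : ζ ^ m = 1) (σ : L →ₐ[E] L)
    (hσ : σ x = algebraMap E L ζ * x) {c : L} (hc : c ∈ E⟮x ^ m⟯) : σ c = c := by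
  induction hc using IntermediateField.adjoin_induction with
  | mem y hy =>
    rw [Set.mem_singleton_iff.mp hy, map_pow, hσ, mul_pow, ← map_pow, hζ, map_one, one_mul]
  | algebraMap a => exact σ.commutes a
  | add y z _ _ hy hz => rw [map_add, hy, hz]
  | inv y _ hy => rw [map_inv₀, hy]
  | mul y z _ _ hy hz => rw [map_mul, hy, hz]

theorem AlgEquiv.pow_apply_of_apply_eq_mul (σ : L ≃ₐ[E] L) (hσ : σ x = algebraMap E L ζ * x)
    (j : ℕ) : (σ ^ j) x = algebraMap E L (ζ ^ j) * x := by
  induction j with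
  | zero => simp
  | succ j ih =>
    rw [pow_succ, AlgEquiv.mul_apply, hσ, map_mul, AlgEquiv.commutes, ih, pow_succ, map_mul]
    ring

theorem AlgEquiv.pow_eq_one_of_apply_eq_mul (hx : E⟮x⟯ = ⊤) {m : ℕ} (hζ : ζ ^ m = 1)
    (σ : L ≃ₐ[E] L) (hσ : σ x = algebraMap E L ζ * x) : σ ^ m = 1 := by
  have hσm : (σ ^ m) x = algebraMap E L 1 * x := by
    rw [σ.pow_apply_of_apply_eq_mul hσ, hζ]
  ext c
  exact AlgHom.apply_eq_self_of_mem_adjoin_pow (x := x) (one_pow 1) (σ ^ m).toAlgHom hσm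
    (by simp [hx])

theorem AlgEquiv.eq_zero_of_apply_eq_self_of_eq_apply_sub [CharZero L] {m : ℕ} (hm : m ≠ 0)
    (σ : L ≃ₐ[E] L) (hσm : σ ^ m = 1) {c h : L} (hc : σ c = c) (hch : c = σ h - h) : c = 0 := by
  have hpow : ∀ j : ℕ, (σ ^ j) c = c := by
    intro j
    induction j with
    | zero => rfl
    | succ j ih => rw [pow_succ', AlgEquiv.mul_apply, ih, hc]
  have : m • c = 0 := calc
    m • c = ∑ j ∈ Finset.range m, (σ ^ j) c := by simp [hpow]
    _ = ∑ j ∈ Finset.range m, ((σ ^ (j + 1)) h - (σ ^ j) h) := by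
      refine Finset.sum_congr rfl fun j _ => ?_
      rw [hch, map_sub, pow_succ, AlgEquiv.mul_apply]
    _ = 0 := by rw [Finset.sum_range_sub (fun j => (σ ^ j) h), hσm, pow_zero, sub_self]
  simpa [hm] using this

theorem AlgEquiv.exists_mul_pow_eq_apply_sub_add {m : ℕ} (hζ : IsPrimitiveRoot ζ m)
    (σ : L ≃ₐ[E] L) (hσ : σ x = algebraMap E L ζ * x) {a : L} (ha : a ∈ E⟮x ^ m⟯) (i : ℕ) :
    ∃ g, ∃ c ∈ E⟮x ^ m⟯, a * x ^ i = σ g - g + c := by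
  by_cases hi : m ∣ i
  · obtain ⟨k, rfl⟩ := hi
    refine ⟨0, a * x ^ (m * k), mul_mem ha ?_, by simp⟩
    rw [pow_mul]
    exact pow_mem (mem_adjoin_simple_self E _) k
  · have hζi : algebraMap E L (ζ ^ i - 1) ≠ 0 :=
      (_root_.map_ne_zero _).mpr (sub_ne_zero.mpr (mt (hζ.pow_eq_one_iff_dvd i).mp hi))
    refine ⟨a * x ^ i / algebraMap E L (ζ ^ i - 1), 0, zero_mem _, ?_⟩
    have hσa : σ a = a := σ.toAlgHom.apply_eq_self_of_mem_adjoin_pow hζ.pow_eq_one hσ ha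
    rw [map_div₀, map_mul, hσa, map_pow, hσ, AlgEquiv.commutes]
    field_simp
    simp only [map_sub, map_pow, map_one]
    ring

theorem AlgEquiv.exists_eq_apply_sub_add_of_adjoin_eq_top (hx : E⟮x⟯ = ⊤) {m : ℕ} (hm : 0 < m)
    (hζ : IsPrimitiveRoot ζ m) (σ : L ≃ₐ[E] L) (hσ : σ x = algebraMap E L ζ * x) (f : L) :
    ∃ g, ∃ c ∈ E⟮x ^ m⟯, f = σ g - g + c := by
  set K := E⟮x ^ m⟯
  have hx_alg : IsAlgebraic K x :=
    ⟨X ^ m - C ⟨x ^ m, mem_adjoin_simple_self E _⟩, X_pow_sub_C_ne_zero hm _, by simp⟩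
  have hf : f ∈ K⟮x⟯ :=
    (adjoin_simple_le_iff (K := K⟮x⟯.restrictScalars E)).mpr (mem_adjoin_simple_self K x)
      (hx ▸ mem_top)
  rw [← mem_toSubalgebra, adjoin_simple_toSubalgebra_of_isAlgebraic hx_alg,
    Algebra.adjoin_singleton_eq_range_aeval, AlgHom.mem_range] at hf
  obtain ⟨p, rfl⟩ := hf
  choose g c hc hgc using fun i => σ.exists_mul_pow_eq_apply_sub_add hζ hσ (p.coeff i).2 i
  refine ⟨∑ i ∈ Finset.range (p.natDegree + 1), g i, ∑ i ∈ Finset.range (p.natDegree + 1), c i,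
    sum_mem fun i _ => hc i, ?_⟩
  simp only [aeval_eq_sum_range, Algebra.smul_def, IntermediateField.algebraMap_apply, hgc,
    map_sum, Finset.sum_add_distrib, Finset.sum_sub_distrib]

end RootOfUnityTwist

/-- Let `E` be a field of characteristic zero, `q ∈ E` a primitive `m`-th root of unity
(`q^m = 1` with `m` minimal), and let `τ_y` be the `E`-automorphism of `E(y)` with
`τ_y(y) = q·y`.  Every `f ∈ E(y)` decomposes as `f = τ_y(g) - g + c` with `g ∈ E(y)`
and `c ∈ E(y^m)`; moreover for any such decomposition, `f` is `τ_y`-summable in `E(y)`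
iff `c = 0`. -/
theorem qshift_normal_form_root_of_unity (E : Type*) [Field E] [CharZero E]
    (m : ℕ) (hm : 0 < m) (q : E) (hq : IsPrimitiveRoot q m)
    (τy : RatFunc E ≃ₐ[E] RatFunc E)
    (hτy : τy RatFunc.X = RatFunc.C q * RatFunc.X)
    (f : RatFunc E) :
    (∃ g c : RatFunc E,
        c ∈ IntermediateField.adjoin E {(RatFunc.X : RatFunc E) ^ m} ∧
        f = τy g - g + c) ∧
    (∀ g c : RatFunc E,
        c ∈ IntermediateField.adjoin E {(RatFunc.X : RatFunc E) ^ m} →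
        f = τy g - g + c →
        ((∃ g' : RatFunc E, f = τy g' - g') ↔ c = 0)) := by
  have hτ : τy RatFunc.X = algebraMap E (RatFunc E) q * RatFunc.X := by
    rwa [RatFunc.algebraMap_eq_C]
  refine ⟨?_, fun g c hc hf => ⟨fun ⟨g', hg'⟩ => ?_, fun hc0 => ⟨g, by rw [hf, hc0, add_zero]⟩⟩⟩
  · exact τy.exists_eq_apply_sub_add_of_adjoin_eq_top RatFunc.adjoin_X hm hq hτ f
  · have hc_eq : c = τy (g' - g) - (g' - g) := by
      rw [map_sub]
      linear_combination hg' - hf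
    exact τy.eq_zero_of_apply_eq_self_of_eq_apply_sub hm.ne'
      (τy.pow_eq_one_of_apply_eq_mul RatFunc.adjoin_X hq.pow_eq_one hτ)
      (τy.toAlgHom.apply_eq_self_of_mem_adjoin_pow hq.pow_eq_one hτ hc) hc_eq
end

section
/- A rational function f ∈ F(x,y) satisfies f = τ_x(g) − g + τ_y(h) − h for some g, h ∈ F(x,y) if and only if Tr_{F(x,y)/F(x^m,y^m)}(f) = 0. -/
/-- The element `x` of `F(x,y)`. -/
noncomputable abbrev RatFunc2.x (F : Type*) [Field F] : RatFunc2 F := RatFunc.C RatFunc.X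

/-- The element `y` of `F(x,y)`. -/
noncomputable abbrev RatFunc2.y (F : Type*) [Field F] : RatFunc2 F := RatFunc.X

open Finset IntermediateField Module Function

section CyclicTrace

variable {G V : Type*} [Monoid G] [AddCommGroup V] [DistribMulAction G V]

def cyclicTrace (σ : G) (m : ℕ) : V →+ V :=
  ∑ i ∈ range m, DistribSMul.toAddMonoidHom V (σ ^ i)

theorem cyclicTrace_apply (σ : G) (m : ℕ) (v : V) :
    cyclicTrace σ m v = ∑ i ∈ range m, σ ^ i • v := by
  simp [cyclicTrace, AddMonoidHom.finsetSum_apply]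

theorem smul_cyclicTrace_eq_cyclicTrace_succ_sub (σ : G) (m : ℕ) (v : V) :
    σ • cyclicTrace σ m v = cyclicTrace σ (m + 1) v - v := by
  simp only [cyclicTrace_apply, smul_sum, smul_smul, ← pow_succ', sum_range_succ' _ m, pow_zero,
    one_smul, add_sub_cancel_right]

theorem smul_cyclicTrace_of_commute {σ τ : G} (h : Commute τ σ) (m : ℕ) (v : V) :
    τ • cyclicTrace σ m v = cyclicTrace σ m (τ • v) := by
  simp only [cyclicTrace_apply, smul_sum, smul_smul, (h.pow_right _).eq]

variable {σ : G} {m : ℕ}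

theorem cyclicTrace_smul_sub_self (hσ : σ ^ m = 1) (v : V) : cyclicTrace σ m (σ • v - v) = 0 := by
  simp only [cyclicTrace_apply, smul_sub, smul_smul, ← pow_succ]
  rw [sum_range_sub (fun i ↦ σ ^ i • v), hσ, pow_zero, sub_self]

theorem smul_cyclicTrace_of_pow_eq_one (hσ : σ ^ m = 1) (v : V) :
    σ • cyclicTrace σ m v = cyclicTrace σ m v := by
  rw [← sub_eq_zero, smul_cyclicTrace_of_commute (Commute.refl σ), ← map_sub,
    cyclicTrace_smul_sub_self hσ]

theorem cyclicTrace_of_smul_eq_self {v : V} (hv : σ • v = v) (m : ℕ) :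
    cyclicTrace σ m v = m • v := by
  have hpow : ∀ i : ℕ, σ ^ i • v = v := fun i ↦ by
    induction i with
    | zero => rw [pow_zero, one_smul]
    | succ i ih => rw [pow_succ, mul_smul, hv, ih]
  simp [cyclicTrace_apply, hpow]

variable {k : Type*} [DivisionRing k] [Module k V] [SMulCommClass G k V]

theorem cyclicTrace_smul (c : k) (v : V) : cyclicTrace σ m (c • v) = c • cyclicTrace σ m v := by
  simp only [cyclicTrace_apply, smul_sum, smul_comm _ c]

theorem exists_smul_sub_eq_of_cyclicTrace_eq_zero (hm : (m : k) ≠ 0) {v : V}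
    (hv : cyclicTrace σ m v = 0) : ∃ w, σ • w - w = v := by
  set B := ∑ i ∈ range m, cyclicTrace σ i v
  have hB : σ • B - B = -(m • v) := by
    calc σ • B - B = ∑ i ∈ range m, (cyclicTrace σ (i + 1) v - cyclicTrace σ i v) - m • v := by
          simp only [B, smul_sum, smul_cyclicTrace_eq_cyclicTrace_succ_sub, sum_sub_distrib,
            sum_const, card_range]
          abel
      _ = -(m • v) := by
          rw [sum_range_sub (fun i ↦ cyclicTrace σ i v), hv]
          simp [cyclicTrace_apply]
  refine ⟨-(m : k)⁻¹ • B, ?_⟩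
  rw [smul_comm, ← smul_sub, hB, smul_neg, neg_smul, neg_neg, ← Nat.cast_smul_eq_nsmul k,
    inv_smul_smul₀ hm]

theorem exists_eq_smul_sub_add_smul_sub_iff (hm : (m : k) ≠ 0) {τ : G} (hσ : σ ^ m = 1)
    (hτ : τ ^ m = 1) (hστ : Commute σ τ) (f : V) :
    (∃ g h : V, f = σ • g - g + τ • h - h) ↔ cyclicTrace σ m (cyclicTrace τ m f) = 0 := by
  constructor
  · rintro ⟨g, h, rfl⟩
    rw [add_sub_assoc, map_add, map_sub, ← smul_cyclicTrace_of_commute hστ,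
      cyclicTrace_smul_sub_self hτ, map_add, cyclicTrace_smul_sub_self hσ, map_zero, add_zero]
  · intro hf
    set u := (m : k)⁻¹ • cyclicTrace τ m f
    obtain ⟨g, hg⟩ := exists_smul_sub_eq_of_cyclicTrace_eq_zero hm (σ := σ) (v := u)
      (by rw [cyclicTrace_smul, hf, smul_zero])
    have hu : τ • u = u := by rw [smul_comm, smul_cyclicTrace_of_pow_eq_one hτ]
    obtain ⟨h, hh⟩ := exists_smul_sub_eq_of_cyclicTrace_eq_zero hm (σ := τ) (v := f - u)
      (by rw [map_sub, cyclicTrace_of_smul_eq_self hu, ← Nat.cast_smul_eq_nsmul k,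
        smul_inv_smul₀ hm, sub_self])
    exact ⟨g, h, by rw [add_sub_assoc, hg, hh, add_sub_cancel]⟩

end CyclicTrace

section Trace

variable {F L : Type*} [Field F] [Field L] [Algebra F L]

theorem algebraMap_trace_eq_cyclicTrace_cyclicTrace (K : IntermediateField F L)
    [FiniteDimensional K L] {m : ℕ} {σ τ : Gal(L/F)} (hσ : σ ∈ K.fixingSubgroup)
    (hτ : τ ∈ K.fixingSubgroup)
    (hinj : Injective fun p : Fin m × Fin m ↦ σ ^ (p.1 : ℕ) * τ ^ (p.2 : ℕ))
    (hrank : finrank K L ≤ m * m) (z : L) :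
    algebraMap K L (Algebra.trace K L z) = cyclicTrace σ m (cyclicTrace τ m z) := by
  let e : Fin m × Fin m → Gal(L/K) := fun p ↦
    fixingSubgroupEquiv K (⟨σ, hσ⟩ ^ (p.1 : ℕ) * ⟨τ, hτ⟩ ^ (p.2 : ℕ))
  have he : Injective e := fun p p' h ↦
    hinj (by simpa using congr_arg Subtype.val ((fixingSubgroupEquiv K).injective h))
  have hle : finrank K L ≤ Nat.card Gal(L/K) :=
    hrank.trans (by simpa using Nat.card_le_card_of_injective e he)
  have hcard : Nat.card Gal(L/K) = finrank K L :=
    le_antisymm (Nat.card_eq_fintype_card (α := Gal(L/K)) ▸ AlgEquiv.card_le) hle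
  have : IsGalois K L := IsGalois.of_card_aut_eq_finrank _ _ hcard
  have hbij : Bijective e := (Nat.bijective_iff_injective_and_card e).2
    ⟨he, le_antisymm (Nat.card_le_card_of_injective e he) (by rw [hcard]; simpa using hrank)⟩
  rw [trace_eq_sum_automorphisms, ← Fintype.sum_bijective e hbij (fun p ↦ e p z) _ fun _ ↦ rfl]
  simp only [cyclicTrace_apply, smul_sum, Fintype.sum_prod_type, sum_range]
  rfl

end Trace

section Radical

variable {K L : Type*} [Field K] [Field L] [Algebra K L] {m : ℕ} {α : L} {a : K}

theorem isIntegral_of_pow_eq_algebraMap (hm : m ≠ 0) (h : α ^ m = algebraMap K L a) :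
    IsIntegral K α :=
  .of_pow (Nat.pos_of_ne_zero hm) (h ▸ isIntegral_algebraMap)

theorem finrank_adjoin_simple_le_of_pow_eq_algebraMap (hm : m ≠ 0)
    (h : α ^ m = algebraMap K L a) : finrank K K⟮α⟯ ≤ m := by
  rw [adjoin.finrank (isIntegral_of_pow_eq_algebraMap hm h)]
  have hdeg := minpoly.degree_le_of_ne_zero K α
    (Polynomial.X_pow_sub_C_ne_zero (Nat.pos_of_ne_zero hm) a) (by simp [h])
  simpa using Polynomial.natDegree_le_natDegree hdeg

variable {n : ℕ} {β : L} {b : K}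

theorem finiteDimensional_of_adjoin_pair_eq_top (hm : m ≠ 0) (hn : n ≠ 0)
    (hα : α ^ m = algebraMap K L a) (hβ : β ^ n = algebraMap K L b) (htop : K⟮α, β⟯ = ⊤) :
    FiniteDimensional K L := by
  have := finiteDimensional_adjoin_pair (isIntegral_of_pow_eq_algebraMap hm hα)
    (isIntegral_of_pow_eq_algebraMap hn hβ)
  rw [htop] at this
  exact topEquiv.toLinearEquiv.finiteDimensional

theorem finrank_le_mul_of_adjoin_pair_eq_top (hm : m ≠ 0) (hn : n ≠ 0)
    (hα : α ^ m = algebraMap K L a) (hβ : β ^ n = algebraMap K L b) (htop : K⟮α, β⟯ = ⊤) :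
    finrank K L ≤ m * n := by
  rw [← finrank_top', ← htop, ← Set.singleton_union, adjoin_union]
  exact (finrank_sup_le _ _).trans <| Nat.mul_le_mul
    (finrank_adjoin_simple_le_of_pow_eq_algebraMap hm hα)
    (finrank_adjoin_simple_le_of_pow_eq_algebraMap hn hβ)

end Radical

namespace RatFunc2

variable {F : Type*} [Field F]

theorem C_C_mul_eq_smul (a : F) (z : RatFunc2 F) : RatFunc.C (RatFunc.C a) * z = a • z :=
  (Algebra.smul_def a z).symm

theorem adjoin_x_y : F⟮x F, y F⟯ = ⊤ := by
  set S := F⟮x F, y F⟯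
  have hC : ∀ r : RatFunc F, algebraMap (RatFunc F) (RatFunc2 F) r ∈ S := by
    have hle : (F⟮(RatFunc.X : RatFunc F)⟯).map
        (IsScalarTower.toAlgHom F (RatFunc F) (RatFunc2 F)) ≤ S := by
      rw [adjoin_map, Set.image_singleton, adjoin_le_iff, Set.singleton_subset_iff]
      exact subset_adjoin F _ (Set.mem_insert _ _)
    intro r
    exact hle ⟨r, by rw [RatFunc.adjoin_X]; trivial, rfl⟩
  have hy : (RatFunc F)⟮y F⟯ ≤ S.toSubfield.toIntermediateField hC :=
    adjoin_simple_le_iff.2 (subset_adjoin F _ (Set.mem_insert_of_mem _ rfl))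
  rw [RatFunc.adjoin_X] at hy
  exact eq_top_iff.2 fun z _ ↦ hy trivial

theorem algEquiv_ext {σ τ : RatFunc2 F ≃ₐ[F] RatFunc2 F} (hx : σ (x F) = τ (x F))
    (hy : σ (y F) = τ (y F)) : σ = τ := by
  have hfix : ∀ z ∈ F⟮x F, y F⟯, (τ⁻¹ * σ) • z = z :=
    (forall_mem_adjoin_smul_eq_self_iff F _).2 <| by
      rintro z (rfl | rfl) <;> simp [AlgEquiv.smul_def, hx, hy]
  rw [adjoin_x_y] at hfix
  exact (inv_mul_eq_one.1 (AlgEquiv.ext fun z ↦ hfix z trivial)).symm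

theorem x_ne_zero : x F ≠ 0 := (map_ne_zero _).2 RatFunc.X_ne_zero

theorem y_ne_zero : y F ≠ 0 := RatFunc.X_ne_zero

def IsScaling (σ : RatFunc2 F ≃ₐ[F] RatFunc2 F) (a b : F) : Prop :=
  σ (x F) = a • x F ∧ σ (y F) = b • y F

namespace IsScaling

variable {σ τ : RatFunc2 F ≃ₐ[F] RatFunc2 F} {a b c d : F}

theorem one : IsScaling (1 : RatFunc2 F ≃ₐ[F] RatFunc2 F) 1 1 := by
  simp [IsScaling]

theorem mul (hσ : IsScaling σ a b) (hτ : IsScaling τ c d) : IsScaling (σ * τ) (a * c) (b * d) := by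
  simp only [IsScaling, AlgEquiv.mul_apply, hσ.1, hσ.2, hτ.1, hτ.2, map_smul, smul_smul,
    mul_comm c, mul_comm d, and_self]

theorem pow (hσ : IsScaling σ a b) (n : ℕ) : IsScaling (σ ^ n) (a ^ n) (b ^ n) := by
  induction n with
  | zero => simpa using one
  | succ n ih => simpa only [pow_succ] using ih.mul hσ

theorem unique (hσ : IsScaling σ a b) (hτ : IsScaling τ a b) : σ = τ :=
  algEquiv_ext (hσ.1.trans hτ.1.symm) (hσ.2.trans hτ.2.symm)

theorem commute (hσ : IsScaling σ a b) (hτ : IsScaling τ c d) : Commute σ τ :=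
  (hσ.mul hτ).unique (by simpa only [mul_comm] using hτ.mul hσ)

theorem pow_eq_one {m : ℕ} (hσ : IsScaling σ a b) (ha : a ^ m = 1) (hb : b ^ m = 1) :
    σ ^ m = 1 := by
  have := hσ.pow m
  rw [ha, hb] at this
  exact this.unique one

theorem scalars_eq (hσ : IsScaling σ a b) (hσ' : IsScaling σ c d) : a = c ∧ b = d :=
  ⟨smul_left_injective F x_ne_zero (hσ.1.symm.trans hσ'.1),
   smul_left_injective F y_ne_zero (hσ.2.symm.trans hσ'.2)⟩

theorem mem_fixingSubgroup {m : ℕ} (hσ : IsScaling σ a b) (ha : a ^ m = 1) (hb : b ^ m = 1) :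
    σ ∈ (F⟮x F ^ m, y F ^ m⟯).fixingSubgroup := by
  rw [IntermediateField.mem_fixingSubgroup_iff]
  refine (forall_mem_adjoin_smul_eq_self_iff F σ).2 ?_
  rintro z (rfl | rfl) <;> simp [AlgEquiv.smul_def, hσ.1, hσ.2, smul_pow, ha, hb]

end IsScaling

theorem algebraMap_trace_eq_cyclicTrace {m : ℕ} (hm : m ≠ 0) {q : F} (hq : IsPrimitiveRoot q m)
    {σ τ : RatFunc2 F ≃ₐ[F] RatFunc2 F} (hσ : IsScaling σ q 1) (hτ : IsScaling τ 1 q)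
    (z : RatFunc2 F) :
    algebraMap F⟮x F ^ m, y F ^ m⟯ (RatFunc2 F)
        (Algebra.trace F⟮x F ^ m, y F ^ m⟯ (RatFunc2 F) z) =
      cyclicTrace σ m (cyclicTrace τ m z) := by
  set K := F⟮x F ^ m, y F ^ m⟯
  have hx : x F ^ m = algebraMap K (RatFunc2 F) ⟨_, mem_adjoin_pair_left F _ _⟩ := rfl
  have hy : y F ^ m = algebraMap K (RatFunc2 F) ⟨_, mem_adjoin_pair_right F _ _⟩ := rfl
  have htop : K⟮x F, y F⟯ = ⊤ := adjoin_eq_top_of_adjoin_eq_top F adjoin_x_y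
  have := finiteDimensional_of_adjoin_pair_eq_top hm hm hx hy htop
  refine algebraMap_trace_eq_cyclicTrace_cyclicTrace K
    (hσ.mem_fixingSubgroup hq.pow_eq_one (one_pow m))
    (hτ.mem_fixingSubgroup (one_pow m) hq.pow_eq_one) ?_
    (finrank_le_mul_of_adjoin_pair_eq_top hm hm hx hy htop) z
  rintro ⟨i, j⟩ ⟨i', j'⟩ (h : σ ^ (i : ℕ) * τ ^ (j : ℕ) = σ ^ (i' : ℕ) * τ ^ (j' : ℕ))
  obtain ⟨hi, hj⟩ := ((hσ.pow i).mul (hτ.pow j)).scalars_eq (h ▸ (hσ.pow i').mul (hτ.pow j'))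
  simp only [one_pow, mul_one, one_mul] at hi hj
  exact Prod.ext (Fin.ext (hq.pow_inj i.2 i'.2 hi)) (Fin.ext (hq.pow_inj j.2 j'.2 hj))

end RatFunc2

theorem qshift_bivariate_summable_iff_trace_eq_zero_general
    (F : Type*) [Field F] [CharZero F]
    (m : ℕ) (hm : 0 < m) (q : F) (hq : IsPrimitiveRoot q m)
    (τx τy : RatFunc2 F ≃ₐ[F] RatFunc2 F)
    (hτxx : τx (RatFunc2.x F) = RatFunc.C (RatFunc.C q) * RatFunc2.x F)
    (hτxy : τx (RatFunc2.y F) = RatFunc2.y F)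
    (hτyx : τy (RatFunc2.x F) = RatFunc2.x F)
    (hτyy : τy (RatFunc2.y F) = RatFunc.C (RatFunc.C q) * RatFunc2.y F)
    (f : RatFunc2 F) :
    (∃ g h : RatFunc2 F, f = τx g - g + τy h - h)
      ↔ Algebra.trace
          (IntermediateField.adjoin F {RatFunc2.x F ^ m, RatFunc2.y F ^ m})
          (RatFunc2 F) f = 0 := by
  have hx : RatFunc2.IsScaling τx q 1 :=
    ⟨by rw [hτxx, RatFunc2.C_C_mul_eq_smul], by rw [hτxy, one_smul]⟩
  have hy : RatFunc2.IsScaling τy 1 q :=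
    ⟨by rw [hτyx, one_smul], by rw [hτyy, RatFunc2.C_C_mul_eq_smul]⟩
  have hsum := exists_eq_smul_sub_add_smul_sub_iff (Nat.cast_ne_zero.2 hm.ne' : (m : F) ≠ 0)
    (hx.pow_eq_one hq.pow_eq_one (one_pow m)) (hy.pow_eq_one (one_pow m) hq.pow_eq_one)
    (hx.commute hy) f
  simp only [AlgEquiv.smul_def] at hsum
  rw [hsum, ← RatFunc2.algebraMap_trace_eq_cyclicTrace hm.ne' hq hx hy,
    map_eq_zero_iff _ (FaithfulSMul.algebraMap_injective _ _)]

/-- Let `F` be an algebraically closed field of characteristic zero, `q ∈ F` a primitive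
`m`-th root of unity, and `τ_x, τ_y` the `F`-automorphisms of `F(x,y)` with
`τ_x(x) = q·x`, `τ_x(y) = y`, `τ_y(x) = x`, `τ_y(y) = q·y`.  Then `f ∈ F(x,y)` satisfies
`f = τ_x(g) - g + τ_y(h) - h` for some `g, h ∈ F(x,y)` iff
`Tr_{F(x,y)/F(x^m,y^m)}(f) = 0`. -/
theorem qshift_bivariate_summable_iff_trace_eq_zero
    (F : Type*) [Field F] [IsAlgClosed F] [CharZero F]
    (m : ℕ) (hm : 0 < m) (q : F) (hq : IsPrimitiveRoot q m)
    (τx τy : RatFunc2 F ≃ₐ[F] RatFunc2 F)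
    (hτxx : τx (RatFunc2.x F) = RatFunc.C (RatFunc.C q) * RatFunc2.x F)
    (hτxy : τx (RatFunc2.y F) = RatFunc2.y F)
    (hτyx : τy (RatFunc2.x F) = RatFunc2.x F)
    (hτyy : τy (RatFunc2.y F) = RatFunc.C (RatFunc.C q) * RatFunc2.y F)
    (f : RatFunc2 F) :
    (∃ g h : RatFunc2 F, f = τx g - g + τy h - h)
      ↔ Algebra.trace
          (IntermediateField.adjoin F {RatFunc2.x F ^ m, RatFunc2.y F ^ m})
          (RatFunc2 F) f = 0 :=
  qshift_bivariate_summable_iff_trace_eq_zero_general F m hm q hq τx τy hτxx hτxy hτyx hτyy f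
end

section
/- Every rational function f ∈ F(x,y) can be decomposed as f = τ_x(g) − g + τ_y(h) − h + c with g, h ∈ F(x,y) and c ∈ F(x^m,y^m). Moreover, for any such decomposition, f is (τ_x,τ_y)-summable in F(x,y) (i.e., f = τ_x(g') − g' + τ_y(h') − h' for some g', h' ∈ F(x,y)) if and only if c = 0. -/
open Finset

namespace Module.End

variable {K V : Type*} [Field K] [AddCommGroup V] [Module K V]

noncomputable def average (T : Module.End K V) (n : ℕ) : Module.End K V :=
  (n : K)⁻¹ • ∑ i ∈ range n, T ^ i

variable {S T : Module.End K V} {m n : ℕ}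

theorem mul_average (hT : T ^ n = 1) : T * average T n = average T n := by
  have h := mul_geom_sum T n
  rw [hT, sub_self, sub_mul, one_mul, sub_eq_zero] at h
  rw [average, mul_smul_comm, h]

theorem commute_average (h : Commute S T) : Commute S (average T n) :=
  (Commute.sum_right _ _ _ fun i _ => h.pow_right i).smul_right _

theorem average_mul (hT : T ^ n = 1) : average T n * T = average T n :=
  (commute_average (Commute.refl T)).eq ▸ mul_average hT

theorem average_apply_of_apply_eq (hn : (n : K) ≠ 0) {v : V} (hv : T v = v) :
    average T n v = v := by
  have hpow (i : ℕ) : (T ^ i) v = v := by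
    rw [Module.End.pow_apply, Function.iterate_fixed hv]
  simp only [average, LinearMap.smul_apply, LinearMap.coe_sum, Finset.sum_apply, hpow, sum_const,
    card_range]
  rw [← Nat.cast_smul_eq_nsmul K, smul_smul, inv_mul_cancel₀ hn, one_smul]

theorem one_sub_average (hn : (n : K) ≠ 0) :
    1 - average T n = (T - 1) * (-(n : K)⁻¹ • ∑ i ∈ range n, ∑ j ∈ range i, T ^ j) := by
  rw [mul_smul_comm, mul_sum]
  simp_rw [mul_geom_sum, sum_sub_distrib, average]
  rw [sum_const, card_range, ← Nat.cast_smul_eq_nsmul K, smul_sub, smul_smul, neg_mul,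
    inv_mul_cancel₀ hn]
  simp only [neg_smul, one_smul, neg_sub_neg]

theorem exists_sub_average_apply (hn : (n : K) ≠ 0) (v : V) :
    ∃ g, v - average T n v = T g - g :=
  ⟨_, congr($(one_sub_average (T := T) hn) v)⟩

theorem exists_eq_sub_add_sub_add_average (hm : (m : K) ≠ 0) (hn : (n : K) ≠ 0) (v : V) :
    ∃ g h, v = S g - g + T h - h + (average S m * average T n) v := by
  obtain ⟨h, hh⟩ := exists_sub_average_apply (T := T) hn v
  obtain ⟨g, hg⟩ := exists_sub_average_apply (T := S) hm (average T n v)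
  refine ⟨g, h, ?_⟩
  rw [Module.End.mul_apply, ← sub_eq_zero]
  calc _ = (v - average T n v) + (average T n v - average S m (average T n v))
        - (S g - g) - (T h - h) := by abel
    _ = 0 := by rw [hg, hh]; abel

theorem average_mul_average_apply (hS : S ^ m = 1) (hT : T ^ n = 1) (hST : Commute S T)
    (hm : (m : K) ≠ 0) (hn : (n : K) ≠ 0) (g h : V) {c : V} (hSc : S c = c) (hTc : T c = c) :
    (average S m * average T n) (S g - g + T h - h + c) = c := by
  have hPS : average S m * average T n * S = average S m * average T n := by
    rw [mul_assoc, ← (commute_average hST).eq, ← mul_assoc, average_mul hS]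
  have hPT : average S m * average T n * T = average S m * average T n := by
    rw [mul_assoc, average_mul hT]
  simp only [map_add, map_sub, ← Module.End.mul_apply, hPS, hPT, sub_self, zero_add]
  rw [Module.End.mul_apply, average_apply_of_apply_eq hn hTc, average_apply_of_apply_eq hm hSc]

theorem mul_average_mul_average_left (hS : S ^ m = 1) :
    S * (average S m * average T n) = average S m * average T n := by
  rw [← mul_assoc, mul_average hS]

theorem mul_average_mul_average_right (hT : T ^ n = 1) (hST : Commute S T) :
    T * (average S m * average T n) = average S m * average T n := by
  rw [← mul_assoc, (commute_average hST.symm).eq, mul_assoc, mul_average hT]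

end Module.End

open IntermediateField Module

theorem IntermediateField.mem_of_forall_apply_eq_self {F L : Type*} [Field F] [Field L]
    [Algebra F L] (E : IntermediateField F L) [FiniteDimensional E L] {ι : Type*} [Finite ι]
    {σ : ι → L ≃ₐ[F] L} (hσE : ∀ i, σ i ∈ E.fixingSubgroup) (hσ : Function.Injective σ)
    (hcard : finrank E L ≤ Nat.card ι) {z : L} (hz : ∀ i, σ i z = z) : z ∈ E := by
  let σ' (i : ι) : Gal(L/E) := E.fixingSubgroupEquiv ⟨σ i, hσE i⟩
  have hσ' : Function.Injective σ' := fun i j hij =>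
    hσ (congrArg Subtype.val (E.fixingSubgroupEquiv.injective hij))
  have hGal : Nat.card Gal(L/E) ≤ finrank E L :=
    (Nat.card_le_card_of_injective _ AlgEquiv.coe_toAlgHom_injective).trans
      (card_algHom_le_finrank E L L)
  have hbij := hσ'.bijective_of_nat_card_le (hGal.trans hcard)
  have : IsGalois E L := IsGalois.of_card_aut_eq_finrank E L
    (hGal.antisymm (hcard.trans (Nat.card_le_card_of_injective σ' hσ')))
  have hzbot : z ∈ fixedField (⊤ : Subgroup Gal(L/E)) := fun ⟨τ, _⟩ => by
    obtain ⟨i, rfl⟩ := hbij.2 τ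
    exact hz i
  rw [IsGalois.fixedField_top, mem_bot] at hzbot
  obtain ⟨e, rfl⟩ := hzbot
  exact e.2

section

variable {K L : Type*} [Field K] [Field L] [Algebra K L]

theorem IntermediateField.eqOn_adjoin {L' : Type*} [Field L'] [Algebra K L'] {φ ψ : L →ₐ[K] L'}
    {S : Set L} (h : Set.EqOn φ ψ S) : Set.EqOn φ ψ (adjoin K S) := fun z hz =>
  DFunLike.congr_fun (adjoin_algHom_ext K (φ₁ := φ.comp (val _)) (φ₂ := ψ.comp (val _))
    fun _ hx => h hx) ⟨z, hz⟩

theorem IntermediateField.algEquiv_ext_of_adjoin_eq_top {S : Set L} (hS : adjoin K S = ⊤)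
    {σ τ : L ≃ₐ[K] L} (h : Set.EqOn σ τ S) : σ = τ :=
  AlgEquiv.ext fun _ => eqOn_adjoin (φ := σ.toAlgHom) (ψ := τ.toAlgHom) h (hS ▸ mem_top)

open Polynomial in
theorem IntermediateField.finrank_adjoin_simple_le_of_pow_eq {m : ℕ} (hm : m ≠ 0) {a : L} {c : K}
    (ha : a ^ m = algebraMap K L c) : IsIntegral K a ∧ finrank K K⟮a⟯ ≤ m := by
  have hmonic := monic_X_pow_sub_C c hm
  have hroot : aeval a (X ^ m - C c) = 0 := by simp [ha]
  have hint : IsIntegral K a := ⟨_, hmonic, hroot⟩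
  refine ⟨hint, ?_⟩
  rw [adjoin.finrank hint, ← natDegree_X_pow_sub_C (n := m) (r := c)]
  exact natDegree_le_of_dvd (minpoly.dvd K a hroot) hmonic.ne_zero

theorem IntermediateField.finrank_le_of_adjoin_pair_eq_top {m : ℕ} (hm : m ≠ 0) {a b : L}
    (hab : adjoin K {a, b} = ⊤) {c d : K} (ha : a ^ m = algebraMap K L c)
    (hb : b ^ m = algebraMap K L d) : FiniteDimensional K L ∧ finrank K L ≤ m * m := by
  obtain ⟨hai, ham⟩ := finrank_adjoin_simple_le_of_pow_eq hm ha
  obtain ⟨hbi, hbm⟩ := finrank_adjoin_simple_le_of_pow_eq hm hb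
  have := adjoin.finiteDimensional hai
  have := adjoin.finiteDimensional hbi
  have hsup : K⟮a⟯ ⊔ K⟮b⟯ = ⊤ := by rw [← adjoin_union, Set.singleton_union, hab]
  refine ⟨?_, ?_⟩
  · have : FiniteDimensional K (⊤ : IntermediateField K L) := hsup ▸ inferInstance
    exact Module.Finite.equiv topEquiv.toLinearEquiv
  · calc finrank K L = finrank K (K⟮a⟯ ⊔ K⟮b⟯ : IntermediateField K L) := by
          rw [hsup, finrank_top']
      _ ≤ m * m := (finrank_sup_le _ _).trans (Nat.mul_le_mul ham hbm)

theorem AlgEquiv.pow_apply_eq_smul {σ : L ≃ₐ[K] L} {q : K} {x : L} (h : σ x = q • x) (i : ℕ) :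
    (σ ^ i) x = q ^ i • x := by
  induction i with
  | zero => simp
  | succ i ih => rw [pow_succ', AlgEquiv.mul_apply, ih, map_smul, h, smul_smul, pow_succ]

theorem AlgEquiv.pow_apply_eq_self {σ : L ≃ₐ[K] L} {x : L} (h : σ x = x) (i : ℕ) :
    (σ ^ i) x = x := by
  rw [AlgEquiv.coe_pow, Function.iterate_fixed h]

variable {m : ℕ} {q : K} {a b : L}

theorem AlgEquiv.pow_eq_one_of_apply_eq_smul (hab : adjoin K {a, b} = ⊤) (hq : q ^ m = 1)
    {σ : L ≃ₐ[K] L} (ha : σ a = q • a) (hb : σ b = b) : σ ^ m = 1 :=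
  algEquiv_ext_of_adjoin_eq_top hab <| by
    rintro x (rfl | rfl) <;>
      simp [AlgEquiv.pow_apply_eq_smul ha, AlgEquiv.pow_apply_eq_self hb, hq]

theorem AlgEquiv.commute_of_apply_eq_smul (hab : adjoin K {a, b} = ⊤) {r : K}
    {σ τ : L ≃ₐ[K] L} (hσa : σ a = q • a) (hσb : σ b = b) (hτa : τ a = a) (hτb : τ b = r • b) :
    Commute σ τ :=
  algEquiv_ext_of_adjoin_eq_top hab <| by
    rintro x (rfl | rfl) <;> simp [hσa, hσb, hτa, hτb]

theorem AlgEquiv.apply_eq_self_of_mem_adjoin_pow (hq : q ^ m = 1) {σ : L ≃ₐ[K] L}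
    (ha : σ a = q • a) (hb : σ b = b) {z : L} (hz : z ∈ adjoin K {a ^ m, b ^ m}) : σ z = z :=
  eqOn_adjoin (φ := σ.toAlgHom) (ψ := AlgHom.id K L)
    (by rintro x (rfl | rfl) <;> simp [ha, hb, smul_pow, hq]) hz

theorem IntermediateField.mem_adjoin_pow_iff_apply_eq_self (hm : 0 < m)
    (hq : IsPrimitiveRoot q m) (ha0 : a ≠ 0) (hb0 : b ≠ 0) (hab : adjoin K {a, b} = ⊤)
    {σ τ : L ≃ₐ[K] L} (hσa : σ a = q • a) (hσb : σ b = b) (hτa : τ a = a) (hτb : τ b = q • b)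
    {z : L} : z ∈ adjoin K {a ^ m, b ^ m} ↔ σ z = z ∧ τ z = z := by
  set E := adjoin K {a ^ m, b ^ m}
  have hσE (w : L) (hw : w ∈ E) : σ w = w :=
    AlgEquiv.apply_eq_self_of_mem_adjoin_pow hq.pow_eq_one hσa hσb hw
  have hτE (w : L) (hw : w ∈ E) : τ w = w :=
    AlgEquiv.apply_eq_self_of_mem_adjoin_pow hq.pow_eq_one hτb hτa (Set.pair_comm (a ^ m) _ ▸ hw)
  refine ⟨fun hz => ⟨hσE z hz, hτE z hz⟩, fun ⟨hσz, hτz⟩ => ?_⟩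
  have hEab : adjoin E {a, b} = ⊤ := by
    rw [← restrictScalars_eq_top_iff (K := K), restrictScalars_adjoin, eq_top_iff, ← hab]
    exact adjoin.mono _ _ _ Set.subset_union_right
  obtain ⟨_, hfin⟩ := finrank_le_of_adjoin_pair_eq_top hm.ne' hEab
    (c := ⟨a ^ m, subset_adjoin _ _ (by simp)⟩) (d := ⟨b ^ m, subset_adjoin _ _ (by simp)⟩)
    rfl rfl
  let ρ (p : Fin m × Fin m) : L ≃ₐ[K] L := σ ^ (p.1 : ℕ) * τ ^ (p.2 : ℕ)
  have hρa (p : Fin m × Fin m) : ρ p a = q ^ (p.1 : ℕ) • a := by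
    simp [ρ, AlgEquiv.pow_apply_eq_self hτa, AlgEquiv.pow_apply_eq_smul hσa]
  have hρb (p : Fin m × Fin m) : ρ p b = q ^ (p.2 : ℕ) • b := by
    simp [ρ, AlgEquiv.pow_apply_eq_self hσb, AlgEquiv.pow_apply_eq_smul hτb]
  have hρ : Function.Injective ρ := fun p p' h => by
    have h1 := smul_left_injective K ha0 ((hρa p).symm.trans (congr($h a).trans (hρa p')))
    have h2 := smul_left_injective K hb0 ((hρb p).symm.trans (congr($h b).trans (hρb p')))
    exact Prod.ext (Fin.ext (hq.pow_inj p.1.2 p'.1.2 h1)) (Fin.ext (hq.pow_inj p.2.2 p'.2.2 h2))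
  have hρE (p : Fin m × Fin m) : ρ p ∈ E.fixingSubgroup :=
    mul_mem (pow_mem ((mem_fixingSubgroup_iff _ _).mpr hσE) _)
      (pow_mem ((mem_fixingSubgroup_iff _ _).mpr hτE) _)
  refine E.mem_of_forall_apply_eq_self hρE hρ (by simpa using hfin) fun p => ?_
  simp [ρ, AlgEquiv.pow_apply_eq_self hσz, AlgEquiv.pow_apply_eq_self hτz]

end

theorem RatFunc2.adjoin_x_y_eq_top (F : Type*) [Field F] :
    adjoin F {RatFunc2.x F, RatFunc2.y F} = ⊤ := by
  have hC : Set.range (algebraMap (RatFunc F) (RatFunc2 F)) ⊆ adjoin F {x F, y F} := by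
    rintro _ ⟨a, rfl⟩
    have ha : a ∈ (adjoin F {RatFunc.X} : IntermediateField F (RatFunc F)) :=
      RatFunc.adjoin_X (K := F) ▸ mem_top
    have := (mem_map _ (f := IsScalarTower.toAlgHom F (RatFunc F) (RatFunc2 F))).mpr ⟨a, ha, rfl⟩
    rw [adjoin_map, Set.image_singleton] at this
    exact adjoin.mono _ _ _ (by simp [RatFunc2.x]) this
  have hsub := (adjoin_subset_adjoin_iff (RatFunc F) (F' := F) (S := {RatFunc.X})
    (S' := {x F, y F})).mpr ⟨hC, by simpa using subset_adjoin F {x F, y F} (by simp)⟩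
  rw [RatFunc.adjoin_X] at hsub
  exact eq_top_iff.mpr fun z _ => hsub (Set.mem_univ z)

open Module.End in
theorem qshift_bivariate_normal_form_root_of_unity_general
    (F : Type*) [Field F] [CharZero F]
    (m : ℕ) (hm : 0 < m) (q : F) (hq : IsPrimitiveRoot q m)
    (τx τy : RatFunc2 F ≃ₐ[F] RatFunc2 F)
    (hτxx : τx (RatFunc2.x F) = RatFunc.C (RatFunc.C q) * RatFunc2.x F)
    (hτxy : τx (RatFunc2.y F) = RatFunc2.y F)
    (hτyx : τy (RatFunc2.x F) = RatFunc2.x F)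
    (hτyy : τy (RatFunc2.y F) = RatFunc.C (RatFunc.C q) * RatFunc2.y F)
    (f : RatFunc2 F) :
    (∃ g h c : RatFunc2 F,
        c ∈ IntermediateField.adjoin F {RatFunc2.x F ^ m, RatFunc2.y F ^ m} ∧
        f = τx g - g + τy h - h + c) ∧
    (∀ g h c : RatFunc2 F,
        c ∈ IntermediateField.adjoin F {RatFunc2.x F ^ m, RatFunc2.y F ^ m} →
        f = τx g - g + τy h - h + c →
        ((∃ g' h' : RatFunc2 F, f = τx g' - g' + τy h' - h') ↔ c = 0)) := by
  have hxy := RatFunc2.adjoin_x_y_eq_top F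
  have hyx : adjoin F {RatFunc2.y F, RatFunc2.x F} = ⊤ := Set.pair_comm _ _ ▸ hxy
  have hx : τx (RatFunc2.x F) = q • RatFunc2.x F := by rw [hτxx, Algebra.smul_def]; rfl
  have hy : τy (RatFunc2.y F) = q • RatFunc2.y F := by rw [hτyy, Algebra.smul_def]; rfl
  have hS : τx.toLinearMap ^ m = 1 := by
    rw [← AlgEquiv.pow_toLinearMap,
      AlgEquiv.pow_eq_one_of_apply_eq_smul hxy hq.pow_eq_one hx hτxy]; rfl
  have hT : τy.toLinearMap ^ m = 1 := by
    rw [← AlgEquiv.pow_toLinearMap,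
      AlgEquiv.pow_eq_one_of_apply_eq_smul hyx hq.pow_eq_one hy hτyx]; rfl
  have hST := (AlgEquiv.commute_of_apply_eq_smul hxy hx hτxy hτyx hy).map
    (AlgEquiv.toLinearMapHom F _)
  have hm' : (m : F) ≠ 0 := Nat.cast_ne_zero.mpr hm.ne'
  have hE (c : RatFunc2 F) := mem_adjoin_pow_iff_apply_eq_self hm hq
    (by simp [RatFunc.X_ne_zero]) RatFunc.X_ne_zero hxy hx hτxy hτyx hy (z := c)
  refine ⟨?_, fun g h c hc hf => ?_⟩
  · obtain ⟨g, h, hf⟩ := exists_eq_sub_add_sub_add_average hm' hm' f (S := τx.toLinearMap)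
      (T := τy.toLinearMap)
    exact ⟨g, h, _, (hE _).mpr ⟨congr($(mul_average_mul_average_left hS) f),
      congr($(mul_average_mul_average_right hT hST) f)⟩, hf⟩
  · obtain ⟨hcx, hcy⟩ := (hE c).mp hc
    have hPf := hf ▸ average_mul_average_apply hS hT hST hm' hm' g h hcx hcy
    refine ⟨fun ⟨g', h', hf'⟩ => ?_, fun hc0 => ⟨g, h, by rw [hf, hc0, add_zero]⟩⟩
    rw [← hPf, hf', ← add_zero (τx g' - g' + τy h' - h')]
    exact average_mul_average_apply hS hT hST hm' hm' g' h' (map_zero _) (map_zero _)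

/-- Let `F` be an algebraically closed field of characteristic zero, `q ∈ F` a primitive
`m`-th root of unity, and `τ_x, τ_y` the `F`-automorphisms of `F(x,y)` with
`τ_x(x) = q·x`, `τ_x(y) = y`, `τ_y(x) = x`, `τ_y(y) = q·y`.  Every `f ∈ F(x,y)`
decomposes as `f = τ_x(g) - g + τ_y(h) - h + c` with `g, h ∈ F(x,y)` and
`c ∈ F(x^m,y^m)`; moreover for any such decomposition, `f` is `(τ_x,τ_y)`-summable
in `F(x,y)` iff `c = 0`. -/
theorem qshift_bivariate_normal_form_root_of_unity
    (F : Type*) [Field F] [IsAlgClosed F] [CharZero F]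
    (m : ℕ) (hm : 0 < m) (q : F) (hq : IsPrimitiveRoot q m)
    (τx τy : RatFunc2 F ≃ₐ[F] RatFunc2 F)
    (hτxx : τx (RatFunc2.x F) = RatFunc.C (RatFunc.C q) * RatFunc2.x F)
    (hτxy : τx (RatFunc2.y F) = RatFunc2.y F)
    (hτyx : τy (RatFunc2.x F) = RatFunc2.x F)
    (hτyy : τy (RatFunc2.y F) = RatFunc.C (RatFunc.C q) * RatFunc2.y F)
    (f : RatFunc2 F) :
    (∃ g h c : RatFunc2 F,
        c ∈ IntermediateField.adjoin F {RatFunc2.x F ^ m, RatFunc2.y F ^ m} ∧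
        f = τx g - g + τy h - h + c) ∧
    (∀ g h c : RatFunc2 F,
        c ∈ IntermediateField.adjoin F {RatFunc2.x F ^ m, RatFunc2.y F ^ m} →
        f = τx g - g + τy h - h + c →
        ((∃ g' h' : RatFunc2 F, f = τx g' - g' + τy h' - h') ↔ c = 0)) :=
  qshift_bivariate_normal_form_root_of_unity_general F m hm q hq τx τy hτxx hτxy hτyx hτyy f
end

section
/- The double series Σ_{n=1}^∞ Σ_{m=1}^∞ 1/(m + n/2)^3 converges and equals 4ζ(2) − (9/2)ζ(3). -/
open Finset

private lemma summable_comp_aux (p : ℕ) (hp : 1 < p) {u : ℕ → ℝ}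
    (hu : ∀ k : ℕ, (k : ℝ) + 1 ≤ u k) :
    Summable (fun k : ℕ => 1 / (u k) ^ p) := by
  have hbase : Summable (fun k : ℕ => 1 / ((k : ℝ) + 1) ^ p) := by
    have := (summable_nat_add_iff 1).mpr (Real.summable_one_div_nat_pow.mpr hp)
    exact this.congr fun b => by push_cast; ring
  refine Summable.of_nonneg_of_le (fun k => ?_) (fun k => ?_) hbase
  · have h0 : (0:ℝ) < u k := lt_of_lt_of_le (by positivity) (hu k)
    positivity
  · have h0 : (0:ℝ) < (k : ℝ) + 1 := by positivity
    exact one_div_le_one_div_of_le (by positivity)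
      (pow_le_pow_left₀ (le_of_lt h0) (hu k) p)

private lemma conv_lemma {g : ℕ → ℝ} (hg0 : ∀ t, 0 ≤ g t)
    (hg : Summable (fun t : ℕ => ((t : ℝ) + 1) * g t)) :
    (∀ j : ℕ, Summable fun m : ℕ => g (j + m)) ∧
      (Summable fun j : ℕ => ∑' m : ℕ, g (j + m)) ∧
      (∑' (j : ℕ) (m : ℕ), g (j + m)) = ∑' t : ℕ, ((t : ℝ) + 1) * g t := by
  classical
  set F : (Σ n : ℕ, (antidiagonal n : Finset (ℕ × ℕ))) → ℝ := fun x => g x.1 with hFdef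
  have hcard : ∀ n : ℕ, (∑' _ : {p : ℕ × ℕ // p ∈ antidiagonal n}, g n) = ((n : ℝ) + 1) * g n := by
    intro n
    rw [Finset.tsum_subtype (antidiagonal n) (fun _ => g n), Finset.sum_const,
      Nat.card_antidiagonal, nsmul_eq_mul]
    push_cast; ring
  have hsig : Summable F := by
    rw [summable_sigma_of_nonneg (fun x => hg0 _)]
    exact ⟨fun n => Summable.of_finite, hg.congr fun n => (hcard n).symm⟩
  have key : (fun p : ℕ × ℕ => g (p.1 + p.2)) ∘ Finset.HasAntidiagonal.sigmaAntidiagonalEquivProd = F := by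
    funext x
    obtain ⟨n, ⟨p, hp⟩⟩ := x
    have : p.1 + p.2 = n := Finset.HasAntidiagonal.mem_antidiagonal.mp hp
    simp [hFdef, Finset.HasAntidiagonal.sigmaAntidiagonalEquivProd, this]
  have hsum : Summable (fun p : ℕ × ℕ => g (p.1 + p.2)) :=
    (Equiv.summable_iff Finset.HasAntidiagonal.sigmaAntidiagonalEquivProd).mp (key ▸ hsig)
  obtain ⟨h1, h2⟩ := (summable_prod_of_nonneg (fun p => hg0 _)).mp hsum
  refine ⟨h1, h2, ?_⟩
  have e1 : (∑' p : ℕ × ℕ, g (p.1 + p.2)) = ∑' x, F x := by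
    rw [← Equiv.tsum_eq Finset.HasAntidiagonal.sigmaAntidiagonalEquivProd (fun p : ℕ × ℕ => g (p.1 + p.2))]
    exact tsum_congr fun x => congrFun key x
  have e2 : (∑' x, F x) = ∑' t : ℕ, ((t : ℝ) + 1) * g t := by
    rw [Summable.tsum_sigma' (fun n => Summable.of_finite) hsig]
    exact tsum_congr fun n => hcard n
  rw [← Summable.tsum_prod' hsum h1, e1, e2]


private lemma shift_one {f : ℕ → ℝ} (hf : Summable f) :
    (∑' b : ℕ, f (b + 1)) = (∑' b : ℕ, f b) - f 0 := by
  rw [Summable.tsum_eq_zero_add hf]; ring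

/-- The double series `Σ_{n≥1} Σ_{m≥1} 1/(m + n/2)^3` converges and equals
`4ζ(2) - (9/2)ζ(3)`, where `ζ(s) = Σ_{n≥1} 1/n^s`. -/
theorem double_sum_half_shift :
    (∀ n : ℕ, Summable (fun m : ℕ => (1 : ℝ) / (((m : ℝ) + 1) + ((n : ℝ) + 1) / 2) ^ 3)) ∧
    Summable (fun n : ℕ => ∑' m : ℕ, (1 : ℝ) / (((m : ℝ) + 1) + ((n : ℝ) + 1) / 2) ^ 3) ∧
    (∑' (n : ℕ) (m : ℕ), (1 : ℝ) / (((m : ℝ) + 1) + ((n : ℝ) + 1) / 2) ^ 3)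
      = 4 * (∑' n : ℕ, (1 : ℝ) / ((n : ℝ) + 1) ^ 2)
        - (9 / 2) * ∑' n : ℕ, (1 : ℝ) / ((n : ℝ) + 1) ^ 3 := by
  have hs2 : Summable (fun k : ℕ => (1:ℝ)/((k:ℝ)+1)^2) :=
    summable_comp_aux 2 one_lt_two (fun k => le_refl _)
  have hs3 : Summable (fun k : ℕ => (1:ℝ)/((k:ℝ)+1)^3) :=
    summable_comp_aux 3 (by norm_num) (fun k => le_refl _)
  have ha2 : Summable (fun t : ℕ => (1:ℝ)/(2*(t:ℝ)+3)^2) :=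
    summable_comp_aux 2 one_lt_two (fun k => by have := Nat.cast_nonneg (α := ℝ) k; linarith)
  have ha3 : Summable (fun t : ℕ => (1:ℝ)/(2*(t:ℝ)+3)^3) :=
    summable_comp_aux 3 (by norm_num) (fun k => by have := Nat.cast_nonneg (α := ℝ) k; linarith)
  have hb2 : Summable (fun t : ℕ => (1:ℝ)/((t:ℝ)+2)^2) :=
    summable_comp_aux 2 one_lt_two (fun k => by linarith)
  have hb3 : Summable (fun t : ℕ => (1:ℝ)/((t:ℝ)+2)^3) :=
    summable_comp_aux 3 (by norm_num) (fun k => by linarith)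
  have hodd2 : Summable (fun k : ℕ => (1:ℝ)/(2*(k:ℝ)+1)^2) :=
    summable_comp_aux 2 one_lt_two (fun k => by have := Nat.cast_nonneg (α := ℝ) k; linarith)
  have hodd3 : Summable (fun k : ℕ => (1:ℝ)/(2*(k:ℝ)+1)^3) :=
    summable_comp_aux 3 (by norm_num) (fun k => by have := Nat.cast_nonneg (α := ℝ) k; linarith)
  set Z2 := ∑' n : ℕ, (1:ℝ)/((n:ℝ)+1)^2 with hZ2def
  set Z3 := ∑' n : ℕ, (1:ℝ)/((n:ℝ)+1)^3 with hZ3def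
  -- odd sums
  have hOdd2 : (∑' k : ℕ, (1:ℝ)/(2*(k:ℝ)+1)^2) = (3/4) * Z2 := by
    have hfe : Summable (fun k : ℕ => (1:ℝ)/(((2*k : ℕ):ℝ)+1)^2) :=
      summable_comp_aux 2 one_lt_two
        (fun k => by push_cast; have := Nat.cast_nonneg (α := ℝ) k; linarith)
    have hfo : Summable (fun k : ℕ => (1:ℝ)/(((2*k+1 : ℕ):ℝ)+1)^2) :=
      summable_comp_aux 2 one_lt_two
        (fun k => by push_cast; have := Nat.cast_nonneg (α := ℝ) k; linarith)
    have hsplit := tsum_even_add_odd (f := fun n : ℕ => (1:ℝ)/((n:ℝ)+1)^2) hfe hfo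
    have e1 : (∑' k : ℕ, (1:ℝ)/(((2*k : ℕ):ℝ)+1)^2) = ∑' k : ℕ, (1:ℝ)/(2*(k:ℝ)+1)^2 :=
      tsum_congr fun k => by push_cast; ring_nf
    have e2 : (∑' k : ℕ, (1:ℝ)/(((2*k+1 : ℕ):ℝ)+1)^2)
        = ∑' k : ℕ, (1/4 : ℝ) * ((1:ℝ)/((k:ℝ)+1)^2) := by
      refine tsum_congr fun k => ?_
      have h : ((2*k+1 : ℕ):ℝ)+1 = 2*((k:ℝ)+1) := by push_cast; ring
      rw [h]; field_simp; ring
    rw [e1, e2, tsum_mul_left] at hsplit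
    linarith
  have hOdd3 : (∑' k : ℕ, (1:ℝ)/(2*(k:ℝ)+1)^3) = (7/8) * Z3 := by
    have hfe : Summable (fun k : ℕ => (1:ℝ)/(((2*k : ℕ):ℝ)+1)^3) :=
      summable_comp_aux 3 (by norm_num)
        (fun k => by push_cast; have := Nat.cast_nonneg (α := ℝ) k; linarith)
    have hfo : Summable (fun k : ℕ => (1:ℝ)/(((2*k+1 : ℕ):ℝ)+1)^3) :=
      summable_comp_aux 3 (by norm_num)
        (fun k => by push_cast; have := Nat.cast_nonneg (α := ℝ) k; linarith)
    have hsplit := tsum_even_add_odd (f := fun n : ℕ => (1:ℝ)/((n:ℝ)+1)^3) hfe hfo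
    have e1 : (∑' k : ℕ, (1:ℝ)/(((2*k : ℕ):ℝ)+1)^3) = ∑' k : ℕ, (1:ℝ)/(2*(k:ℝ)+1)^3 :=
      tsum_congr fun k => by push_cast; ring_nf
    have e2 : (∑' k : ℕ, (1:ℝ)/(((2*k+1 : ℕ):ℝ)+1)^3)
        = ∑' k : ℕ, (1/8 : ℝ) * ((1:ℝ)/((k:ℝ)+1)^3) := by
      refine tsum_congr fun k => ?_
      have h : ((2*k+1 : ℕ):ℝ)+1 = 2*((k:ℝ)+1) := by push_cast; ring
      rw [h]; field_simp; ring
    rw [e1, e2, tsum_mul_left] at hsplit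
    linarith
  -- shifted sums
  have hShift2 : (∑' t : ℕ, (1:ℝ)/(2*(t:ℝ)+3)^2) = (3/4) * Z2 - 1 := by
    have h := shift_one hodd2
    have h0 : (1:ℝ)/(2*((0:ℕ):ℝ)+1)^2 = 1 := by norm_num
    have e : (∑' t : ℕ, (1:ℝ)/(2*(t:ℝ)+3)^2)
        = ∑' t : ℕ, (1:ℝ)/(2*(((t+1 : ℕ)):ℝ)+1)^2 :=
      tsum_congr fun t => by push_cast; ring_nf
    rw [e, h, h0, hOdd2]
  have hShift3 : (∑' t : ℕ, (1:ℝ)/(2*(t:ℝ)+3)^3) = (7/8) * Z3 - 1 := by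
    have h := shift_one hodd3
    have h0 : (1:ℝ)/(2*((0:ℕ):ℝ)+1)^3 = 1 := by norm_num
    have e : (∑' t : ℕ, (1:ℝ)/(2*(t:ℝ)+3)^3)
        = ∑' t : ℕ, (1:ℝ)/(2*(((t+1 : ℕ)):ℝ)+1)^3 :=
      tsum_congr fun t => by push_cast; ring_nf
    rw [e, h, h0, hOdd3]
  have hEb2 : (∑' t : ℕ, (1:ℝ)/((t:ℝ)+2)^2) = Z2 - 1 := by
    have h := shift_one hs2
    have h0 : (1:ℝ)/(((0:ℕ):ℝ)+1)^2 = 1 := by norm_num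
    have e : (∑' t : ℕ, (1:ℝ)/((t:ℝ)+2)^2)
        = ∑' t : ℕ, (1:ℝ)/((((t+1 : ℕ)):ℝ)+1)^2 :=
      tsum_congr fun t => by push_cast; ring_nf
    rw [e, h, h0]
  have hEb3 : (∑' t : ℕ, (1:ℝ)/((t:ℝ)+2)^3) = Z3 - 1 := by
    have h := shift_one hs3
    have h0 : (1:ℝ)/(((0:ℕ):ℝ)+1)^3 = 1 := by norm_num
    have e : (∑' t : ℕ, (1:ℝ)/((t:ℝ)+2)^3)
        = ∑' t : ℕ, (1:ℝ)/((((t+1 : ℕ)):ℝ)+1)^3 :=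
      tsum_congr fun t => by push_cast; ring_nf
    rw [e, h, h0]
  -- weighted summability and convolution for g1, g2
  have hw1 : Summable (fun t : ℕ => ((t:ℝ)+1) * ((8:ℝ)/(2*(t:ℝ)+3)^3)) := by
    refine ((ha2.mul_left 4).sub (ha3.mul_left 4)).congr fun t => ?_
    have hne : (2*(t:ℝ)+3) ≠ 0 := by positivity
    field_simp; ring
  have hw2 : Summable (fun t : ℕ => ((t:ℝ)+1) * ((1:ℝ)/((t:ℝ)+2)^3)) := by
    refine ((hb2.mul_left 1).sub (hb3.mul_left 1)).congr fun t => ?_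
    have hne : ((t:ℝ)+2) ≠ 0 := by positivity
    field_simp; ring
  obtain ⟨hj1, hJ1, hE1⟩ := conv_lemma (g := fun t : ℕ => (8:ℝ)/(2*(t:ℝ)+3)^3)
    (fun t => by positivity) hw1
  obtain ⟨hj2, hJ2, hE2⟩ := conv_lemma (g := fun t : ℕ => (1:ℝ)/((t:ℝ)+2)^3)
    (fun t => by positivity) hw2
  -- claim 1 : inner summability
  have claim1 : ∀ n : ℕ, Summable (fun m : ℕ => (1 : ℝ) / (((m : ℝ) + 1) + ((n : ℝ) + 1) / 2) ^ 3) := by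
    intro n
    exact summable_comp_aux 3 (by norm_num)
      (fun m => by have := Nat.cast_nonneg (α := ℝ) n; linarith)
  -- even/odd values of the outer function
  have hOe : ∀ j : ℕ,
      (∑' m : ℕ, (1 : ℝ) / (((m : ℝ) + 1) + (((2*j : ℕ) : ℝ) + 1) / 2) ^ 3)
        = ∑' m : ℕ, (8:ℝ)/(2*(((j + m : ℕ)):ℝ)+3)^3 := by
    intro j
    refine tsum_congr fun m => ?_
    rw [div_eq_div_iff (by positivity) (by positivity)]
    push_cast; ring
  have hOo : ∀ j : ℕ,
      (∑' m : ℕ, (1 : ℝ) / (((m : ℝ) + 1) + (((2*j+1 : ℕ) : ℝ) + 1) / 2) ^ 3)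
        = ∑' m : ℕ, (1:ℝ)/((((j + m : ℕ)):ℝ)+2)^3 := by
    intro j
    refine tsum_congr fun m => ?_
    rw [div_eq_div_iff (by positivity) (by positivity)]
    push_cast; ring
  have he : Summable (fun j : ℕ =>
      ∑' m : ℕ, (1 : ℝ) / (((m : ℝ) + 1) + (((2*j : ℕ) : ℝ) + 1) / 2) ^ 3) :=
    hJ1.congr fun j => (hOe j).symm
  have ho : Summable (fun j : ℕ =>
      ∑' m : ℕ, (1 : ℝ) / (((m : ℝ) + 1) + (((2*j+1 : ℕ) : ℝ) + 1) / 2) ^ 3) :=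
    hJ2.congr fun j => (hOo j).symm
  have claim2 : Summable (fun n : ℕ =>
      ∑' m : ℕ, (1 : ℝ) / (((m : ℝ) + 1) + ((n : ℝ) + 1) / 2) ^ 3) :=
    Summable.even_add_odd (f := fun n : ℕ =>
      ∑' m : ℕ, (1 : ℝ) / (((m : ℝ) + 1) + ((n : ℝ) + 1) / 2) ^ 3) he ho
  refine ⟨claim1, claim2, ?_⟩
  have hsplit := tsum_even_add_odd (f := fun n : ℕ =>
      ∑' m : ℕ, (1 : ℝ) / (((m : ℝ) + 1) + ((n : ℝ) + 1) / 2) ^ 3) he ho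
  -- evaluate the two convolution sums
  have hval1 : (∑' t : ℕ, ((t:ℝ)+1) * ((8:ℝ)/(2*(t:ℝ)+3)^3)) = 3 * Z2 - (7/2) * Z3 := by
    have e : ∀ t : ℕ, ((t:ℝ)+1) * ((8:ℝ)/(2*(t:ℝ)+3)^3)
        = 4 * ((1:ℝ)/(2*(t:ℝ)+3)^2) - 4 * ((1:ℝ)/(2*(t:ℝ)+3)^3) := by
      intro t
      have hne : (2*(t:ℝ)+3) ≠ 0 := by positivity
      field_simp; ring
    rw [tsum_congr e, Summable.tsum_sub (ha2.mul_left 4) (ha3.mul_left 4),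
      tsum_mul_left, tsum_mul_left, hShift2, hShift3]
    ring
  have hval2 : (∑' t : ℕ, ((t:ℝ)+1) * ((1:ℝ)/((t:ℝ)+2)^3)) = Z2 - Z3 := by
    have e : ∀ t : ℕ, ((t:ℝ)+1) * ((1:ℝ)/((t:ℝ)+2)^3)
        = (1:ℝ)/((t:ℝ)+2)^2 - (1:ℝ)/((t:ℝ)+2)^3 := by
      intro t
      have hne : ((t:ℝ)+2) ≠ 0 := by positivity
      field_simp; ring
    rw [tsum_congr e, Summable.tsum_sub hb2 hb3, hEb2, hEb3]
    ring
  rw [← hsplit, tsum_congr hOe, tsum_congr hOo, hE1, hE2, hval1, hval2]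
  ring
end

section
/- For every positive integer n, the rational function 1/(x^n + y^n) ∈ F(x,y) is (τ_x,τ_y)-summable in F(x,y) if and only if n is not divisible by m. Moreover, when m does not divide n, writing c_n = q^n/(1 − q^n), one has the explicit identity 1/(x^n+y^n) = τ_x(c_n/(x^n+y^n)) − c_n/(x^n+y^n) + τ_y(c_n/(q^n x^n + y^n)) − c_n/(q^n x^n + y^n). -/
lemma RatFunc2.CC_eq_algebraMap {F : Type*} [Field F] (a : F) :
    algebraMap F (RatFunc2 F) a = RatFunc.C (RatFunc.C a) := by
  rw [RatFunc.algebraMap_apply, map_one, div_one, Polynomial.algebraMap_apply,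
    RatFunc.algebraMap_eq_C, RatFunc.algebraMap_C]

lemma RatFunc2.algHom_ext {F : Type*} [Field F] (φ ψ : RatFunc2 F →ₐ[F] RatFunc2 F)
    (hx : φ (RatFunc2.x F) = ψ (RatFunc2.x F)) (hy : φ (RatFunc2.y F) = ψ (RatFunc2.y F)) :
    ∀ z, φ z = ψ z := by
  suffices h : (φ : RatFunc2 F →+* RatFunc2 F) = (ψ : RatFunc2 F →+* RatFunc2 F) by
    intro z; exact RingHom.congr_fun h z
  apply IsLocalization.ringHom_ext (nonZeroDivisors (Polynomial (RatFunc F)))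
  apply Polynomial.ringHom_ext'
  · apply IsLocalization.ringHom_ext (nonZeroDivisors (Polynomial F))
    apply Polynomial.ringHom_ext'
    · ext a
      simp only [RingHom.comp_apply, Polynomial.algebraMap_apply, RatFunc.algebraMap_eq_C,
        RatFunc.algebraMap_C, Polynomial.C_comp]
      simp only [RingHom.coe_comp, Function.comp_apply, RatFunc.algebraMap_C,
        AlgHom.coe_toRingHom]
      rw [← RatFunc2.CC_eq_algebraMap, AlgHom.commutes, AlgHom.commutes]
    · simp only [RingHom.coe_comp, Function.comp_apply, RatFunc.algebraMap_X,
        AlgHom.coe_toRingHom]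
      simpa [RatFunc.algebraMap_C] using hx
  · simpa [RatFunc.algebraMap_X] using hy

lemma RatFunc2.algEquiv_ext_s18 {F : Type*} [Field F] (φ ψ : RatFunc2 F ≃ₐ[F] RatFunc2 F)
    (hx : φ (RatFunc2.x F) = ψ (RatFunc2.x F)) (hy : φ (RatFunc2.y F) = ψ (RatFunc2.y F)) :
    ∀ z, φ z = ψ z := by
  have := RatFunc2.algHom_ext (φ.toAlgHom) (ψ.toAlgHom) (by simpa using hx) (by simpa using hy)
  intro z; simpa using this z

/-- `X ^ n + C c ≠ 0` in `RatFunc K`, for `n > 0`. -/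
lemma RatFunc.X_pow_add_C_ne_zero {K : Type*} [Field K] {n : ℕ} (hn : 0 < n) (c : K) :
    (RatFunc.X : RatFunc K) ^ n + RatFunc.C c ≠ 0 := by
  have h : (Polynomial.X ^ n + Polynomial.C c : Polynomial K) ≠ 0 :=
    Polynomial.X_pow_add_C_ne_zero hn c
  have h2 := (map_ne_zero_iff (algebraMap (Polynomial K) (RatFunc K))
    (IsFractionRing.injective (Polynomial K) (RatFunc K))).mpr h
  simpa [RatFunc.algebraMap_X, RatFunc.algebraMap_C] using h2

/-- Let `F` be an algebraically closed field of characteristic zero, `q ∈ F` a primitive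
`m`-th root of unity, and `τ_x, τ_y` the `q`-shift `F`-automorphisms of `F(x,y)`
(`τ_x(x) = qx`, `τ_x(y) = y`, `τ_y(x) = x`, `τ_y(y) = qy`).  For every positive integer
`n`, `1/(x^n + y^n)` is `(τ_x,τ_y)`-summable in `F(x,y)` iff `m` does not divide `n`;
moreover when `m ∤ n`, with `c_n = q^n/(1-q^n)`, one has the explicit identity
`1/(x^n+y^n) = τ_x(c_n/(x^n+y^n)) - c_n/(x^n+y^n) + τ_y(c_n/(q^n x^n+y^n)) - c_n/(q^n x^n+y^n)`. -/
theorem qshift_summable_inv_xn_add_yn_iff_root_of_unity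
    (F : Type*) [Field F] [IsAlgClosed F] [CharZero F]
    (m : ℕ) (hm : 0 < m) (q : F) (hq : IsPrimitiveRoot q m)
    (τx τy : RatFunc2 F ≃ₐ[F] RatFunc2 F)
    (hτxx : τx (RatFunc2.x F) = RatFunc.C (RatFunc.C q) * RatFunc2.x F)
    (hτxy : τx (RatFunc2.y F) = RatFunc2.y F)
    (hτyx : τy (RatFunc2.x F) = RatFunc2.x F)
    (hτyy : τy (RatFunc2.y F) = RatFunc.C (RatFunc.C q) * RatFunc2.y F)
    (n : ℕ) (hn : 0 < n) :
    ((∃ g h : RatFunc2 F,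
        1 / (RatFunc2.x F ^ n + RatFunc2.y F ^ n) = τx g - g + τy h - h)
      ↔ ¬ (m ∣ n)) ∧
    (¬ (m ∣ n) →
      1 / (RatFunc2.x F ^ n + RatFunc2.y F ^ n)
        = τx (RatFunc.C (RatFunc.C (q ^ n / (1 - q ^ n)))
              / (RatFunc2.x F ^ n + RatFunc2.y F ^ n))
          - RatFunc.C (RatFunc.C (q ^ n / (1 - q ^ n)))
              / (RatFunc2.x F ^ n + RatFunc2.y F ^ n)
          + τy (RatFunc.C (RatFunc.C (q ^ n / (1 - q ^ n)))
              / (RatFunc.C (RatFunc.C (q ^ n)) * RatFunc2.x F ^ n + RatFunc2.y F ^ n))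
          - RatFunc.C (RatFunc.C (q ^ n / (1 - q ^ n)))
              / (RatFunc.C (RatFunc.C (q ^ n)) * RatFunc2.x F ^ n + RatFunc2.y F ^ n)) := by
  haveI : CharZero (RatFunc2 F) :=
    charZero_of_injective_algebraMap (algebraMap F (RatFunc2 F)).injective
  -- basic constants behavior
  have hxc : ∀ a : F, τx (RatFunc.C (RatFunc.C a)) = RatFunc.C (RatFunc.C a) := fun a => by
    rw [← RatFunc2.CC_eq_algebraMap, AlgEquiv.commutes]
  have hyc : ∀ a : F, τy (RatFunc.C (RatFunc.C a)) = RatFunc.C (RatFunc.C a) := fun a => by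
    rw [← RatFunc2.CC_eq_algebraMap, AlgEquiv.commutes]
  have hq0 : q ≠ 0 := hq.ne_zero hm.ne'
  have hCpow : (RatFunc.C (RatFunc.C q) : RatFunc2 F) ^ n = RatFunc.C (RatFunc.C (q ^ n)) := by
    rw [← map_pow, ← map_pow]
  -- τx and τy on the denominators
  have hτxA : τx (RatFunc2.x F ^ n + RatFunc2.y F ^ n)
      = RatFunc.C (RatFunc.C (q ^ n)) * RatFunc2.x F ^ n + RatFunc2.y F ^ n := by
    rw [map_add, map_pow, map_pow, hτxx, hτxy, mul_pow, hCpow]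
  have hτyB : τy (RatFunc.C (RatFunc.C (q ^ n)) * RatFunc2.x F ^ n + RatFunc2.y F ^ n)
      = RatFunc.C (RatFunc.C (q ^ n)) * (RatFunc2.x F ^ n + RatFunc2.y F ^ n) := by
    rw [map_add, map_mul, hyc, map_pow τy, map_pow τy, hτyx, hτyy, mul_pow, hCpow, mul_add]
  -- the explicit identity
  have hid : ¬ (m ∣ n) →
      1 / (RatFunc2.x F ^ n + RatFunc2.y F ^ n)
        = τx (RatFunc.C (RatFunc.C (q ^ n / (1 - q ^ n)))
              / (RatFunc2.x F ^ n + RatFunc2.y F ^ n))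
          - RatFunc.C (RatFunc.C (q ^ n / (1 - q ^ n)))
              / (RatFunc2.x F ^ n + RatFunc2.y F ^ n)
          + τy (RatFunc.C (RatFunc.C (q ^ n / (1 - q ^ n)))
              / (RatFunc.C (RatFunc.C (q ^ n)) * RatFunc2.x F ^ n + RatFunc2.y F ^ n))
          - RatFunc.C (RatFunc.C (q ^ n / (1 - q ^ n)))
              / (RatFunc.C (RatFunc.C (q ^ n)) * RatFunc2.x F ^ n + RatFunc2.y F ^ n) := by
    intro hnd
    have hs1 : q ^ n ≠ 0 := pow_ne_zero _ hq0
    have hs2 : (1 : F) - q ^ n ≠ 0 := by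
      intro hcon
      exact hnd ((hq.pow_eq_one_iff_dvd n).mp (by linear_combination -hcon))
    set c : RatFunc2 F := RatFunc.C (RatFunc.C (q ^ n / (1 - q ^ n))) with hc
    set A : RatFunc2 F := RatFunc2.x F ^ n + RatFunc2.y F ^ n with hA
    set B : RatFunc2 F := RatFunc.C (RatFunc.C (q ^ n)) * RatFunc2.x F ^ n + RatFunc2.y F ^ n
      with hB
    have h1 : τx (c / A) = c / B := by rw [map_div₀, hc, hxc, hτxA]
    have h2 : τy (c / B) = c / (RatFunc.C (RatFunc.C (q ^ n)) * A) := by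
      rw [map_div₀, hc, hyc, hτyB]
    rw [h1, h2]
    have key : c / RatFunc.C (RatFunc.C (q ^ n)) - c = 1 := by
      rw [hc, ← map_div₀, ← map_div₀, ← map_sub, ← map_sub]
      have : q ^ n / (1 - q ^ n) / q ^ n - q ^ n / (1 - q ^ n) = 1 := by
        field_simp
      rw [this, map_one, map_one]
    have step : c / B - c / A + c / (RatFunc.C (RatFunc.C (q ^ n)) * A) - c / B
        = c / RatFunc.C (RatFunc.C (q ^ n)) / A - c / A := by
      rw [div_div]; ring
    rw [step, ← sub_div, key]
  refine ⟨⟨?_, fun hnd => ⟨_, _, hid hnd⟩⟩, hid⟩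
  -- the hard direction: m ∣ n implies not summable
  rintro ⟨g, h, hgh⟩ hdvd
  have hqn : q ^ n = 1 := by
    obtain ⟨k, rfl⟩ := hdvd
    rw [pow_mul, hq.pow_eq_one, one_pow]
  set A : RatFunc2 F := RatFunc2.x F ^ n + RatFunc2.y F ^ n with hA
  have hAne : A ≠ 0 := by
    have hx : (RatFunc2.x F) ^ n = RatFunc.C ((RatFunc.X : RatFunc F) ^ n) := by
      exact (map_pow _ _ _).symm
    rw [hA, hx, add_comm]
    exact RatFunc.X_pow_add_C_ne_zero hn _
  set f0 : RatFunc2 F := 1 / A with hf0def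
  have hf0 : f0 ≠ 0 := one_div_ne_zero hAne
  have hτxf0 : τx f0 = f0 := by
    rw [hf0def, map_div₀, map_one, hA, hτxA, hqn, map_one, map_one, one_mul]
  have hτyf0 : τy f0 = f0 := by
    rw [hf0def, map_div₀, map_one, hA, map_add, map_pow, map_pow, hτyx, hτyy, mul_pow, hCpow,
      hqn, map_one, map_one, one_mul]
  -- powers of τx and τy are the identity at exponent m
  have hτxpow_x : ∀ i : ℕ, (τx ^ i) (RatFunc2.x F)
      = RatFunc.C (RatFunc.C (q ^ i)) * RatFunc2.x F := by
    intro i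
    induction i with
    | zero => simp
    | succ i ih =>
      rw [pow_succ', AlgEquiv.mul_apply, ih, map_mul, hxc, hτxx, pow_succ']
      rw [map_mul, map_mul]; ring
  have hτxpow_y : ∀ i : ℕ, (τx ^ i) (RatFunc2.y F) = RatFunc2.y F := by
    intro i
    induction i with
    | zero => simp
    | succ i ih => rw [pow_succ', AlgEquiv.mul_apply, ih, hτxy]
  have hτypow_x : ∀ i : ℕ, (τy ^ i) (RatFunc2.x F) = RatFunc2.x F := by
    intro i
    induction i with
    | zero => simp
    | succ i ih => rw [pow_succ', AlgEquiv.mul_apply, ih, hτyx]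
  have hτypow_y : ∀ i : ℕ, (τy ^ i) (RatFunc2.y F)
      = RatFunc.C (RatFunc.C (q ^ i)) * RatFunc2.y F := by
    intro i
    induction i with
    | zero => simp
    | succ i ih =>
      rw [pow_succ', AlgEquiv.mul_apply, ih, map_mul, hyc, hτyy, pow_succ']
      rw [map_mul, map_mul]; ring
  have hτxm : ∀ z, (τx ^ m) z = z := by
    refine RatFunc2.algEquiv_ext_s18 (τx ^ m) 1 ?_ ?_
    · rw [hτxpow_x m, hq.pow_eq_one, map_one, map_one, one_mul, AlgEquiv.one_apply]
    · rw [hτxpow_y m, AlgEquiv.one_apply]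
  have hτym : ∀ z, (τy ^ m) z = z := by
    refine RatFunc2.algEquiv_ext_s18 (τy ^ m) 1 ?_ ?_
    · rw [hτypow_x m, AlgEquiv.one_apply]
    · rw [hτypow_y m, hq.pow_eq_one, map_one, map_one, one_mul, AlgEquiv.one_apply]
  -- commutation
  have hcomm : ∀ z, τx (τy z) = τy (τx z) := by
    intro z
    have h1 : ∀ w, (τx * τy) w = (τy * τx) w := by
      apply RatFunc2.algEquiv_ext_s18
      · rw [AlgEquiv.mul_apply, AlgEquiv.mul_apply, hτyx, hτxx, map_mul, hyc, hτyx]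
      · rw [AlgEquiv.mul_apply, AlgEquiv.mul_apply, hτxy, hτyy, map_mul, hxc, hτxy]
    simpa [AlgEquiv.mul_apply] using h1 z
  have hcommpow : ∀ (j : ℕ) (z : RatFunc2 F), τx ((τy ^ j) z) = (τy ^ j) (τx z) := by
    intro j
    induction j with
    | zero => intro z; simp
    | succ j ih =>
      intro z
      rw [pow_succ', AlgEquiv.mul_apply, AlgEquiv.mul_apply, hcomm, ih]
  -- invariance of f0 under powers
  have hinvx : ∀ i : ℕ, (τx ^ i) f0 = f0 := by
    intro i
    induction i with
    | zero => simp
    | succ i ih => rw [pow_succ', AlgEquiv.mul_apply, ih, hτxf0]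
  have hinvy : ∀ j : ℕ, (τy ^ j) f0 = f0 := by
    intro j
    induction j with
    | zero => simp
    | succ j ih => rw [pow_succ', AlgEquiv.mul_apply, ih, hτyf0]
  -- telescoping
  have telescope : ∀ (τ : RatFunc2 F ≃ₐ[F] RatFunc2 F), (∀ z, (τ ^ m) z = z) →
      ∀ f : RatFunc2 F, ∑ j ∈ Finset.range m, (τ ^ j) (τ f - f) = 0 := by
    intro τ hτ f
    have hterm : ∀ j : ℕ, (τ ^ j) (τ f - f) = (τ ^ (j + 1)) f - (τ ^ j) f := by
      intro j
      rw [map_sub, pow_succ, AlgEquiv.mul_apply]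
    calc ∑ j ∈ Finset.range m, (τ ^ j) (τ f - f)
        = ∑ j ∈ Finset.range m, ((τ ^ (j + 1)) f - (τ ^ j) f) :=
          Finset.sum_congr rfl fun j _ => hterm j
      _ = (τ ^ m) f - (τ ^ 0) f := Finset.sum_range_sub (fun j => (τ ^ j) f) m
      _ = 0 := by rw [hτ, pow_zero, AlgEquiv.one_apply, sub_self]
  -- the averaging operator applied to both sides
  have hsplit : f0 = (τx g - g) + (τy h - h) := by rw [hgh]; ring
  have hLHS : ∑ i ∈ Finset.range m, (τx ^ i) (∑ j ∈ Finset.range m, (τy ^ j) f0)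
      = (m * m : ℕ) • f0 := by
    have hin : ∑ j ∈ Finset.range m, (τy ^ j) f0 = m • f0 := by
      rw [Finset.sum_congr rfl fun j _ => hinvy j, Finset.sum_const, Finset.card_range]
    rw [Finset.sum_congr rfl fun i _ => by rw [hin, map_nsmul, hinvx i],
      Finset.sum_const, Finset.card_range, smul_smul]
  have hRHS : ∑ i ∈ Finset.range m, (τx ^ i) (∑ j ∈ Finset.range m, (τy ^ j) f0) = 0 := by
    have hg : ∀ j : ℕ, (τy ^ j) ((τx g - g) + (τy h - h))
        = (τx ((τy ^ j) g) - (τy ^ j) g) + (τy ^ j) (τy h - h) := by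
      intro j
      rw [map_add, map_sub, hcommpow]
    have hsum2 : ∑ j ∈ Finset.range m, (τy ^ j) f0
        = τx (∑ j ∈ Finset.range m, (τy ^ j) g) - ∑ j ∈ Finset.range m, (τy ^ j) g := by
      rw [Finset.sum_congr rfl fun j _ => by rw [hsplit, hg j]]
      rw [Finset.sum_add_distrib, telescope τy hτym h, add_zero, Finset.sum_sub_distrib,
        map_sum]
    rw [Finset.sum_congr rfl fun i _ => by rw [hsum2]]
    exact telescope τx hτxm _
  have : (m * m : ℕ) • f0 = 0 := by rw [← hLHS, hRHS]
  rw [nsmul_eq_mul, mul_eq_zero] at this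
  rcases this with h0 | h0
  · exact (Nat.cast_ne_zero.mpr (by positivity)) h0
  · exact hf0 h0
end

section
/- Let q ∈ ℂ with |q| > 1 and let n be a positive integer. Then the double series Σ_{a=1}^∞ Σ_{b=1}^∞ 1/(q^{an} + q^{bn}) converges and Σ_{a=1}^∞ Σ_{b=1}^∞ 1/(q^{an} + q^{bn}) = (1/(1 − q^n))·(−1/2 − 2·Σ_{a=1}^∞ 1/(q^{an} + 1)). -/
/-!
Write `w = q ^ n` and reindex the pairs `(a, b)` by `m = min a b` and `d = b - a ∈ ℤ`. Then
`1 / (w ^ (a + 1) + w ^ (b + 1)) = w⁻¹ ^ (m + 1) / (w ^ |d| + 1)`, so the double series is the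
product of the geometric series `∑ w⁻¹ ^ (m + 1) = 1 / (w - 1)` with
`∑_{d ∈ ℤ} 1 / (w ^ |d| + 1) = 1 / 2 + 2 ∑_{k ≥ 1} 1 / (w ^ k + 1)`. Since
`‖w ^ k + 1‖ ≥ (1 - ‖w‖⁻¹) ‖w‖ ^ k`, both factors converge absolutely, which justifies the
rearrangement and gives all the summability claims.
-/

def prodEquivMinSub : ℕ × ℕ ≃ ℕ × ℤ where
  toFun p := (min p.1 p.2, (p.2 : ℤ) - p.1)
  invFun p := (p.1 + (-p.2).toNat, p.1 + p.2.toNat)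
  left_inv p := by ext <;> dsimp only <;> omega
  right_inv p := by ext <;> dsimp only <;> omega

theorem pow_add_toNat_neg_add_pow_add_toNat {R : Type*} [CommSemiring R] (w : R) (m : ℕ)
    (d : ℤ) : w ^ (m + (-d).toNat) + w ^ (m + d.toNat) = w ^ m * (w ^ d.natAbs + 1) := by
  rcases d with k | k
  · simp only [Int.ofNat_eq_natCast, Int.toNat_neg_natCast, Int.toNat_natCast,
      Int.natAbs_natCast, add_zero, pow_add]
    ring
  · simp only [Int.neg_negSucc, Nat.cast_add, Nat.cast_one, Int.toNat_natCast_add_one,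
      Int.toNat_negSucc, Int.natAbs_negSucc, Nat.succ_eq_add_one, add_zero, pow_add, pow_one]
    ring

theorem HasSum.comp_natAbs {α : Type*} [AddCommMonoid α] [TopologicalSpace α] [ContinuousAdd α]
    {u : ℕ → α} {a : α} (h : HasSum (fun k ↦ u (k + 1)) a) :
    HasSum (fun d : ℤ ↦ u d.natAbs) (u 0 + a + a) := by
  simpa [add_comm] using HasSum.of_add_one_of_neg_add_one (f := fun d : ℤ ↦ u d.natAbs)
    (by convert h using 3; omega) (by convert h using 3; omega)

theorem le_norm_pow_add_one {w : ℂ} (hw : 1 < ‖w‖) (k : ℕ) :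
    (1 - ‖w‖⁻¹) * ‖w‖ ^ k ≤ ‖w ^ k + 1‖ := by
  rcases k with _ | j
  · rw [pow_zero, pow_zero, mul_one, one_add_one_eq_two, Complex.norm_two]
    linarith [inv_nonneg.2 (norm_nonneg w)]
  · have h1 : 1 ≤ ‖w‖ ^ j := one_le_pow₀ hw.le
    have h2 : ‖w‖ ^ (j + 1) - 1 ≤ ‖w ^ (j + 1) + 1‖ := by
      simpa [norm_pow] using norm_sub_norm_le (w ^ (j + 1)) (-1)
    calc (1 - ‖w‖⁻¹) * ‖w‖ ^ (j + 1) = ‖w‖ ^ (j + 1) - ‖w‖ ^ j := by field_simp; ring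
      _ ≤ ‖w ^ (j + 1) + 1‖ := by linarith

theorem summable_norm_inv_pow_add_one {w : ℂ} (hw : 1 < ‖w‖) :
    Summable fun k : ℕ ↦ ‖(w ^ k + 1)⁻¹‖ := by
  have hr : ‖w‖⁻¹ < 1 := inv_lt_one_of_one_lt₀ hw
  refine .of_nonneg_of_le (fun _ ↦ norm_nonneg _) (fun k ↦ ?_)
    ((summable_geometric_of_lt_one (by positivity) hr).mul_left (1 - ‖w‖⁻¹)⁻¹)
  rw [norm_inv, inv_pow, ← mul_inv]
  exact inv_anti₀ (mul_pos (sub_pos.2 hr) (pow_pos (zero_lt_one.trans hw) k))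
    (le_norm_pow_add_one hw k)

theorem hasSum_inv_pow_succ {w : ℂ} (hw : 1 < ‖w‖) :
    HasSum (fun m : ℕ ↦ (w ^ (m + 1))⁻¹) (w - 1)⁻¹ := by
  have hw0 : w ≠ 0 := norm_pos_iff.mp (zero_lt_one.trans hw)
  have hw1 : w - 1 ≠ 0 := sub_ne_zero.mpr (by rintro rfl; simp at hw)
  have hgeom := (hasSum_geometric_of_norm_lt_one (ξ := w⁻¹)
    (by simpa using inv_lt_one_of_one_lt₀ hw)).mul_left w⁻¹
  have hsum : w⁻¹ * (1 - w⁻¹)⁻¹ = (w - 1)⁻¹ := by field_simp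
  simpa only [hsum, ← inv_pow, ← mul_inv, ← pow_succ'] using hgeom

theorem hasSum_inv_pow_succ_mul_inv_pow_natAbs_add_one {w : ℂ} (hw : 1 < ‖w‖) :
    HasSum (fun p : ℕ × ℤ ↦ (w ^ (p.1 + 1))⁻¹ * (w ^ p.2.natAbs + 1)⁻¹)
      ((w - 1)⁻¹ * (2⁻¹ + 2 * ∑' k : ℕ, (w ^ (k + 1) + 1)⁻¹)) := by
  have hu := (summable_nat_add_iff 1).mpr (summable_norm_inv_pow_add_one hw)
  have hH : HasSum (fun d : ℤ ↦ (w ^ d.natAbs + 1)⁻¹)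
      (2⁻¹ + 2 * ∑' k : ℕ, (w ^ (k + 1) + 1)⁻¹) := by
    have h := hu.of_norm.hasSum.comp_natAbs (u := fun k ↦ (w ^ k + 1)⁻¹)
    rwa [pow_zero, one_add_one_eq_two, add_assoc, ← two_mul] at h
  have hHn : Summable fun d : ℤ ↦ ‖(w ^ d.natAbs + 1)⁻¹‖ :=
    (hu.hasSum.comp_natAbs (u := fun k ↦ ‖(w ^ k + 1)⁻¹‖)).summable
  have hGn : Summable fun m : ℕ ↦ ‖(w ^ (m + 1))⁻¹‖ := by
    simpa [norm_inv, norm_pow, inv_pow] using (summable_nat_add_iff 1).mpr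
      (summable_geometric_of_lt_one (by positivity) (inv_lt_one_of_one_lt₀ hw))
  -- Naming `f` and `g` explicitly keeps higher-order unification from timing out.
  exact HasSum.mul (f := fun m : ℕ ↦ (w ^ (m + 1))⁻¹) (g := fun d : ℤ ↦ (w ^ d.natAbs + 1)⁻¹)
    (hasSum_inv_pow_succ hw) hH
    (summable_mul_of_summable_norm (f := fun m : ℕ ↦ (w ^ (m + 1))⁻¹)
      (g := fun d : ℤ ↦ (w ^ d.natAbs + 1)⁻¹) hGn hHn)

theorem hasSum_inv_pow_add_pow {w : ℂ} (hw : 1 < ‖w‖) :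
    HasSum (fun p : ℕ × ℕ ↦ (w ^ (p.1 + 1) + w ^ (p.2 + 1))⁻¹)
      ((w - 1)⁻¹ * (2⁻¹ + 2 * ∑' k : ℕ, (w ^ (k + 1) + 1)⁻¹)) := by
  have hterm : (fun p : ℕ × ℕ ↦ (w ^ (p.1 + 1) + w ^ (p.2 + 1))⁻¹) ∘ prodEquivMinSub.symm =
      fun p : ℕ × ℤ ↦ (w ^ (p.1 + 1))⁻¹ * (w ^ p.2.natAbs + 1)⁻¹ := by
    ext ⟨m, d⟩
    change (w ^ (m + (-d).toNat + 1) + w ^ (m + d.toNat + 1))⁻¹ = _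
    rw [add_right_comm, add_right_comm m d.toNat, pow_add_toNat_neg_add_pow_add_toNat, mul_inv]
  rw [← prodEquivMinSub.symm.hasSum_iff, hterm]
  exact hasSum_inv_pow_succ_mul_inv_pow_natAbs_add_one hw

/-- Let `q ∈ ℂ` with `|q| > 1` and let `n` be a positive integer.  Then the double
series `Σ_{a≥1} Σ_{b≥1} 1/(q^{an} + q^{bn})` converges and equals
`(1/(1-q^n))·(-1/2 - 2·Σ_{a≥1} 1/(q^{an} + 1))`. -/
theorem q_double_sum_eval (q : ℂ) (hq : 1 < ‖q‖) (n : ℕ) (hn : 0 < n) :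
    (∀ a : ℕ, Summable (fun b : ℕ => 1 / (q ^ ((a + 1) * n) + q ^ ((b + 1) * n)))) ∧
    Summable (fun a : ℕ => ∑' b : ℕ, 1 / (q ^ ((a + 1) * n) + q ^ ((b + 1) * n))) ∧
    Summable (fun a : ℕ => 1 / (q ^ ((a + 1) * n) + 1)) ∧
    (∑' (a : ℕ) (b : ℕ), 1 / (q ^ ((a + 1) * n) + q ^ ((b + 1) * n)))
      = (1 / (1 - q ^ n)) * (-(1 / 2) - 2 * ∑' a : ℕ, 1 / (q ^ ((a + 1) * n) + 1)) := by
  have hw : 1 < ‖q ^ n‖ := by rw [norm_pow]; exact one_lt_pow₀ hq hn.ne'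
  have hS := hasSum_inv_pow_add_pow hw
  simp only [mul_comm _ n, pow_mul, one_div]
  refine ⟨hS.summable.prod_factor, hS.summable.prod,
    ((summable_nat_add_iff 1).mpr (summable_norm_inv_pow_add_one hw)).of_norm, ?_⟩
  rw [← hS.summable.tsum_prod, hS.tsum_eq, ← neg_sub, inv_neg]
  ring
end
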